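/- arXiv:2512.06707 — 9 statements merged into one kernel-verified Lean document; each statement's English description precedes it below -/
import Mathlib

section
/- Let κ be a finite index set with an involution k ↦ k*, let ρ = diag(ρ₁,…,ρ_n) with ρ_i > 0, and let (L_k)_{k∈κ} be a family of n×n complex matrices. Suppose u = (u_{kℓ})_{k,ℓ∈κ} is a complex matrix that is both unitary and symmetric (uᵀ = u) and satisfies ρ^{1/2} L_k† = Σ_ℓ u_{kℓ} L_ℓ ρ^{1/2} for every k ∈ κ. Then there exist a unitary κ×κ matrix v and a family of n×n matrices (J_a)_{a∈κ} such that L_k = Σ_a v_{ka} J_a for all k and ρ^{1/2} J_k† = J_{k*} ρ^{1/2} for all k ∈ κ; consequently ρ_i·|(J_k)_{ji}|² = ρ_j·|(J_{k*})_{ij}|² for all indices i, j and all k ∈ κ, i.e. the new representation has vanishing quantum entropy production rate. -/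
/-!
Since `u` is a symmetric unitary, `x ↦ conj (u x)` is an antiunitary involution of `ℂ^κ`. Its fixed
vectors form a real form of `ℂ^κ`, on which the inner product is real, so a real orthonormal basis
of the real form is a complex orthonormal basis: this gives a unitary `H` with `conj H = u H`. The
same argument for the permutation matrix `P` of `k ↦ k*` gives a unitary `c` with `conj c = c P`,
and `v = H c` satisfies `u v = conj v P`. For `J := v† L`, so that `L = v J`, the relation
`ρ^{1/2} L_k† = ∑ u_{kℓ} L_ℓ ρ^{1/2}` then turns into `ρ^{1/2} J_k† = J_{k*} ρ^{1/2}`, and taking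
absolute values of its entries gives the detailed balance identity.
-/

open Matrix

theorem exists_orthonormalBasis_fixed_of_antiunitary
    {ι E : Type*} [Fintype ι] [NormedAddCommGroup E] [InnerProductSpace ℂ E]
    [FiniteDimensional ℂ E] (hι : Fintype.card ι = Module.finrank ℂ E)
    (σ : E →ₗ⋆[ℂ] E) (hσσ : ∀ x, σ (σ x) = x) (hσ : ∀ x y, inner ℂ (σ x) (σ y) = inner ℂ y x) :
    ∃ b : OrthonormalBasis ι ℂ E, ∀ i, σ (b i) = b i := by
  let _ : InnerProductSpace ℝ E := InnerProductSpace.complexToReal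
  have hσ_real : ∀ (r : ℝ) x, σ (r • x) = r • σ x := fun r x => by
    rw [← Complex.coe_smul, σ.map_smulₛₗ, Complex.conj_ofReal, Complex.coe_smul]
  let V : Submodule ℝ E :=
    { carrier := {x | σ x = x}
      add_mem' := fun {x y} hx hy => by simp_all
      zero_mem' := σ.map_zero
      smul_mem' := fun r x hx => by simp_all }
  have inner_real : ∀ x ∈ V, ∀ y ∈ V, ((inner ℂ x y).re : ℂ) = inner ℂ x y := fun x hx y hy => by
    rw [← Complex.conj_eq_iff_re, inner_conj_symm, ← hσ, hx, hy]
  let b₀ := stdOrthonormalBasis ℝ V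
  have hb₀ : Orthonormal ℂ (fun i => (b₀ i : E)) := by
    rw [orthonormal_iff_ite]
    intro i j
    rw [← inner_real _ (b₀ i).2 _ (b₀ j).2, ← RCLike.re_to_complex, ← real_inner_eq_re_inner ℂ,
      ← Submodule.coe_inner, orthonormal_iff_ite.mp b₀.orthonormal i j]
    split_ifs <;> simp
  have hV : V ≤ (Submodule.span ℂ (Set.range fun i => (b₀ i : E))).restrictScalars ℝ := by
    calc V = (⊤ : Submodule ℝ V).map V.subtype := (Submodule.map_subtype_top V).symm
      _ = Submodule.span ℝ (Set.range fun i => (b₀ i : E)) := by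
        rw [← b₀.toBasis.span_eq, Submodule.map_span, ← Set.range_comp]; rfl
      _ ≤ _ := Submodule.span_le_restrictScalars ℝ ℂ _
  have hspan : ⊤ ≤ Submodule.span ℂ (Set.range fun i => (b₀ i : E)) := by
    intro z _
    have hre : (2⁻¹ : ℝ) • (z + σ z) ∈ V := by
      show σ _ = _
      rw [hσ_real, map_add, hσσ, add_comm]
    have him : (2⁻¹ : ℝ) • (Complex.I • (σ z - z)) ∈ V := by
      show σ _ = _
      rw [hσ_real, σ.map_smulₛₗ, Complex.conj_I, map_sub, hσσ, neg_smul, ← smul_neg, neg_sub]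
    have hz : z = (2⁻¹ : ℝ) • (z + σ z) + Complex.I • ((2⁻¹ : ℝ) • (Complex.I • (σ z - z))) := by
      rw [smul_comm Complex.I ((2⁻¹ : ℝ)), smul_smul, Complex.I_mul_I, ← Complex.coe_smul,
        ← Complex.coe_smul]
      module
    rw [hz]
    exact add_mem (hV hre) (Submodule.smul_mem _ _ (hV him))
  let b := OrthonormalBasis.mk hb₀ hspan
  have hcard : Fintype.card (Fin (Module.finrank ℝ V)) = Fintype.card ι := by
    rw [hι, Module.finrank_eq_card_basis b.toBasis]
  refine ⟨b.reindex (Fintype.equivOfCardEq hcard), fun i => ?_⟩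
  simp only [OrthonormalBasis.reindex_apply, b, OrthonormalBasis.coe_mk]
  exact (b₀ _).2

namespace Matrix

theorem star_mulVec_eq_map_star_mulVec {m n : Type*} [Fintype n] (M : Matrix m n ℂ)
    (v : n → ℂ) : star (M *ᵥ v) = M.map star *ᵥ star v := by
  ext i
  simp [mulVec, dotProduct, star_sum]

theorem exists_unitary_map_star_eq_mul {κ : Type*} [Fintype κ] [DecidableEq κ]
    (W : Matrix κ κ ℂ) (hW : W ∈ unitaryGroup κ ℂ) (hWW : W.map star * W = 1) :
    ∃ H ∈ unitaryGroup κ ℂ, H.map star = W * H := by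
  let σ : EuclideanSpace ℂ κ →ₗ⋆[ℂ] EuclideanSpace ℂ κ :=
    { toFun := fun x => WithLp.toLp 2 (star (W *ᵥ x.ofLp))
      map_add' := fun x y => by simp [mulVec_add]
      map_smul' := fun c x => by simp [mulVec_smul] }
  have hσσ : ∀ x, σ (σ x) = x := fun x => by
    change WithLp.toLp 2 (star (W *ᵥ star (W *ᵥ x.ofLp))) = x
    rw [star_mulVec_eq_map_star_mulVec, star_star, mulVec_mulVec, hWW, one_mulVec]
  have hσ : ∀ x y, inner ℂ (σ x) (σ y) = inner ℂ y x := fun x y => by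
    change star (W *ᵥ y.ofLp) ⬝ᵥ star (star (W *ᵥ x.ofLp)) = x.ofLp ⬝ᵥ star y.ofLp
    rw [star_star, star_mulVec, ← dotProduct_mulVec, mulVec_mulVec, ← star_eq_conjTranspose,
      mem_unitaryGroup_iff'.mp hW, one_mulVec, dotProduct_comm]
  obtain ⟨b, hb⟩ := exists_orthonormalBasis_fixed_of_antiunitary (ι := κ) (by simp) σ hσσ hσ
  refine ⟨(EuclideanSpace.basisFun κ ℂ).toBasis.toMatrix b,
    OrthonormalBasis.toMatrix_orthonormalBasis_mem_unitary _ _, ?_⟩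
  ext i j
  have := congrFun (congrArg (fun x => star (WithLp.ofLp x)) (hb j)) i
  simpa [σ, Module.Basis.toMatrix_apply, mulVec, dotProduct, mul_apply] using this.symm

theorem exists_unitary_map_star_eq_submatrix {κ : Type*} [Fintype κ] [DecidableEq κ]
    (invol : κ → κ) (hinvol : Function.Involutive invol) :
    ∃ c ∈ unitaryGroup κ ℂ, c.map star = c.submatrix id invol := by
  let P : Matrix κ κ ℂ := (1 : Matrix κ κ ℂ).submatrix invol id
  have hP_mul : ∀ M : Matrix κ κ ℂ, P * M = M.submatrix invol id := fun M => by
    ext i j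
    simp [P, mul_apply, one_apply]
  have hP_map : P.map star = P := by
    ext i j
    simp [P, one_apply]
  have hPP : P * P = 1 := by
    rw [hP_mul]
    ext i j
    change (1 : Matrix κ κ ℂ) (invol (invol i)) j = (1 : Matrix κ κ ℂ) i j
    rw [hinvol i]
  have hP : P ∈ unitaryGroup κ ℂ := by
    have hPT : Pᵀ = P := by
      ext i j
      simp only [P, transpose_apply, submatrix_apply, id, one_apply]
      exact if_congr (by rw [eq_comm, hinvol.eq_iff]) rfl rfl
    rw [mem_unitaryGroup_iff', star_eq_conjTranspose, conjTranspose, transpose_map, hP_map, hPT,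
      hPP]
  obtain ⟨H, hH, hH_map⟩ := exists_unitary_map_star_eq_mul P hP (by rw [hP_map, hPP])
  refine ⟨Hᵀ, transpose_mem_unitaryGroup_iff.mpr hH, ?_⟩
  rw [transpose_map, hH_map, hP_mul, transpose_submatrix]

theorem exists_unitary_mul_eq_map_star_submatrix {κ : Type*} [Fintype κ] [DecidableEq κ]
    (invol : κ → κ) (hinvol : Function.Involutive invol)
    (u : Matrix κ κ ℂ) (hu : u ∈ unitaryGroup κ ℂ) (hu_symm : uᵀ = u) :
    ∃ v ∈ unitaryGroup κ ℂ, u * v = (v.map star).submatrix id invol := by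
  have hu_map : u.map star = star u := by
    rw [star_eq_conjTranspose, conjTranspose, hu_symm]
  obtain ⟨H, hH, hH_map⟩ :=
    exists_unitary_map_star_eq_mul u hu (by rw [hu_map, mem_unitaryGroup_iff'.mp hu])
  obtain ⟨c, hc, hc_map⟩ := exists_unitary_map_star_eq_submatrix invol hinvol
  refine ⟨H * c, mul_mem hH hc, ?_⟩
  have hc_eq : (c.map star).submatrix id invol = c := by
    rw [hc_map, submatrix_submatrix, hinvol.comp_self]
    rfl
  calc u * (H * c) = H.map star * (c.map star).submatrix id invol := by
        rw [← mul_assoc, ← hH_map, hc_eq]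
    _ = ((H * c).map star).submatrix id invol := by
        ext i j
        simp [mul_apply]

section lcomb

variable {m n o R X : Type*} [Fintype n] [Semiring R] [AddCommMonoid X] [Module R X]

def lcomb (M : Matrix m n R) (L : n → X) : m → X :=
  fun k => ∑ ℓ, M k ℓ • L ℓ

theorem lcomb_lcomb [Fintype o]
    (M : Matrix m n R) (N : Matrix n o R) (L : o → X) :
    M.lcomb (N.lcomb L) = (M * N).lcomb L := by
  ext k
  simp only [lcomb, Finset.smul_sum, smul_smul, mul_apply, Finset.sum_smul]
  exact Finset.sum_comm

theorem one_lcomb [DecidableEq n] (L : n → X) :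
    (1 : Matrix n n R).lcomb L = L := by
  ext k
  simp [lcomb, one_apply]

variable {p q : Type*}

theorem conjTranspose_lcomb (M : Matrix m n ℂ) (L : n → Matrix p q ℂ) (k : m) :
    (M.lcomb L k)ᴴ = (M.map star).lcomb (fun ℓ => (L ℓ)ᴴ) k := by
  simp [lcomb, conjTranspose_sum]

theorem mul_lcomb [Fintype p] (A : Matrix o p ℂ) (M : Matrix m n ℂ) (L : n → Matrix p q ℂ)
    (k : m) :
    A * M.lcomb L k = M.lcomb (fun ℓ => A * L ℓ) k := by
  simp [lcomb, Matrix.mul_sum]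

theorem lcomb_mul [Fintype q] (M : Matrix m n ℂ) (L : n → Matrix p q ℂ) (A : Matrix q o ℂ)
    (k : m) :
    M.lcomb L k * A = M.lcomb (fun ℓ => L ℓ * A) k := by
  simp [lcomb, Matrix.sum_mul]

end lcomb

theorem mul_conjTranspose_lcomb_conjTranspose {κ p : Type*} [Fintype κ] [Fintype p]
    {invol : κ → κ} {D : Matrix p p ℂ} {L : κ → Matrix p p ℂ} {u v : Matrix κ κ ℂ}
    (hu_symm : uᵀ = u) (hrep : ∀ k, D * (L k)ᴴ = u.lcomb (fun ℓ => L ℓ * D) k)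
    (hv : u * v = (v.map star).submatrix id invol) (k : κ) :
    D * (vᴴ.lcomb L k)ᴴ = vᴴ.lcomb L (invol k) * D := by
  have hvu : vᵀ * u = vᴴ.submatrix invol id := by
    rw [← transpose_transpose (vᵀ * u), transpose_mul, transpose_transpose, hu_symm, hv,
      transpose_submatrix, ← transpose_map]
    rfl
  have hmap : vᴴ.map star = vᵀ := by
    ext
    simp
  calc D * (vᴴ.lcomb L k)ᴴ = vᵀ.lcomb (fun ℓ => D * (L ℓ)ᴴ) k := by
        rw [conjTranspose_lcomb, mul_lcomb, hmap]
    _ = (vᵀ * u).lcomb (fun ℓ => L ℓ * D) k := by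
        rw [← lcomb_lcomb]
        congr
        exact funext hrep
    _ = vᴴ.lcomb L (invol k) * D := by
        rw [hvu, lcomb_mul]
        rfl

theorem mul_normSq_eq_of_sqrt_diagonal_mul_conjTranspose {p : Type*} [Fintype p] [DecidableEq p]
    {ρ : p → ℝ} (hρ : ∀ i, 0 ≤ ρ i) {A B : Matrix p p ℂ}
    (h : diagonal (fun i => (√(ρ i) : ℂ)) * Aᴴ = B * diagonal (fun i => (√(ρ i) : ℂ)))
    (i j : p) : ρ i * Complex.normSq (A j i) = ρ j * Complex.normSq (B i j) := by
  have hij := congrArg (fun M => Complex.normSq (M i j)) h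
  simp only [diagonal_mul, mul_diagonal, conjTranspose_apply, Complex.normSq_mul, Complex.star_def,
    Complex.normSq_conj, Complex.normSq_ofReal, Real.mul_self_sqrt (hρ _)] at hij
  rw [hij, mul_comm]

end Matrix

/-- Matrix core of Theorem 3.1: SQDB (via the Fagnola–Umanità symmetric unitary `u`)
implies the existence of a special representation `(J_a)` with vanishing quantum EPR. -/
theorem sqdb_implies_zero_epr_representation
    {n : ℕ} {κ : Type*} [Fintype κ] [DecidableEq κ]
    (invol : κ → κ) (hinvol : ∀ k, invol (invol k) = k)
    (ρ : Fin n → ℝ) (hρ : ∀ i, 0 < ρ i)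
    (L : κ → Matrix (Fin n) (Fin n) ℂ)
    (u : Matrix κ κ ℂ) (hu_unitary : uᴴ * u = 1) (hu_symm : uᵀ = u)
    (hrep : ∀ k, Matrix.diagonal (fun i => (Real.sqrt (ρ i) : ℂ)) * (L k)ᴴ =
      ∑ ℓ, u k ℓ • (L ℓ * Matrix.diagonal (fun i => (Real.sqrt (ρ i) : ℂ)))) :
    ∃ (v : Matrix κ κ ℂ) (J : κ → Matrix (Fin n) (Fin n) ℂ),
      vᴴ * v = 1 ∧
      (∀ k, L k = ∑ a, v k a • J a) ∧
      (∀ k, Matrix.diagonal (fun i => (Real.sqrt (ρ i) : ℂ)) * (J k)ᴴ =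
        J (invol k) * Matrix.diagonal (fun i => (Real.sqrt (ρ i) : ℂ))) ∧
      (∀ k i j, ρ i * Complex.normSq (J k j i) = ρ j * Complex.normSq (J (invol k) i j)) := by
  obtain ⟨v, hv_unitary, hv⟩ := exists_unitary_mul_eq_map_star_submatrix invol hinvol u
    (mem_unitaryGroup_iff'.mpr hu_unitary) hu_symm
  have hJ := mul_conjTranspose_lcomb_conjTranspose (L := L) hu_symm hrep hv
  refine ⟨v, vᴴ.lcomb L, mem_unitaryGroup_iff'.mp hv_unitary, fun k => ?_, hJ,
    fun k => mul_normSq_eq_of_sqrt_diagonal_mul_conjTranspose (fun i => (hρ i).le) (hJ k)⟩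
  change L k = v.lcomb (vᴴ.lcomb L) k
  rw [lcomb_lcomb, ← star_eq_conjTranspose, mem_unitaryGroup_iff.mp hv_unitary, one_lcomb]
end

section
/- Let κ be a finite index set with an involution k ↦ k*, let ρ = diag(ρ₁,…,ρ_n) with ρ_i > 0, and let (L_k)_{k∈κ} be n×n complex matrices that are thermodynamically consistent with respect to strictly positive reals (c_k)_{k∈κ}, i.e. L_{k*} = c_k·L_k† for all k. Assume the vanishing-EPR condition ρ_i·|(L_k)_{ji}|² = ρ_j·|(L_{k*})_{ij}|² for all indices i, j and all k ∈ κ. Then L_{k*} = ρ^{1/2} L_k† ρ^{-1/2} for every k ∈ κ; equivalently, ρ^{1/2} L_k† = Σ_ℓ Δ_{kℓ} L_ℓ ρ^{1/2} for all k, where Δ is the involution matrix (which is symmetric and unitary), so the Fagnola–Umanità characterization of standard quantum detailed balance holds for this representation. -/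
open Matrix BigOperators

/-- Matrix core of Theorem 3.3: thermodynamic consistency plus vanishing EPR implies
`L_{k*} = ρ^{1/2} L_k† ρ^{-1/2}`, equivalently the Fagnola–Umanità SQDB characterization
with the symmetric unitary involution matrix `Δ`. -/
theorem tc_zero_epr_implies_sqdb
    {n : ℕ} {κ : Type*} [Fintype κ] [DecidableEq κ]
    (invol : κ → κ) (hinvol : ∀ k, invol (invol k) = k)
    (ρ : Fin n → ℝ) (hρ : ∀ i, 0 < ρ i)
    (c : κ → ℝ) (hc : ∀ k, 0 < c k)
    (L : κ → Matrix (Fin n) (Fin n) ℂ)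
    (hTC : ∀ k, L (invol k) = (c k : ℂ) • (L k)ᴴ)
    (hEPR : ∀ k i j, ρ i * Complex.normSq (L k j i) = ρ j * Complex.normSq (L (invol k) i j)) :
    (∀ k, L (invol k) = Matrix.diagonal (fun i => (Real.sqrt (ρ i) : ℂ)) * (L k)ᴴ *
        Matrix.diagonal (fun i => ((Real.sqrt (ρ i))⁻¹ : ℂ))) ∧
    (∀ k, Matrix.diagonal (fun i => (Real.sqrt (ρ i) : ℂ)) * (L k)ᴴ =
        ∑ ℓ, (if invol k = ℓ then (1 : ℂ) else 0) •
          (L ℓ * Matrix.diagonal (fun i => (Real.sqrt (ρ i) : ℂ)))) := by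
  have hsq : ∀ i, Real.sqrt (ρ i) ≠ 0 := fun i =>
    ne_of_gt (Real.sqrt_pos.mpr (hρ i))
  have h1 : ∀ k, L (invol k) = Matrix.diagonal (fun i => (Real.sqrt (ρ i) : ℂ)) * (L k)ᴴ *
        Matrix.diagonal (fun i => ((Real.sqrt (ρ i))⁻¹ : ℂ)) := by
    intro k
    ext i j
    rw [Matrix.mul_diagonal, Matrix.diagonal_mul, hTC k]
    simp only [Matrix.smul_apply, Matrix.conjTranspose_apply, smul_eq_mul]
    by_cases h0 : L k j i = 0
    · simp [h0]
    · -- from EPR: ρ i = ρ j * (c k)^2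
      have hE := hEPR k i j
      rw [hTC k] at hE
      simp only [Matrix.smul_apply, Matrix.conjTranspose_apply, smul_eq_mul] at hE
      rw [Complex.normSq_mul] at hE
      rw [show Complex.normSq (star (L k j i)) = Complex.normSq (L k j i) by
        simpa using Complex.normSq_conj (L k j i)] at hE
      have hck : Complex.normSq ((c k : ℂ)) = (c k)^2 := by
        simp [Complex.normSq_ofReal, sq]
      rw [hck] at hE
      have hns : Complex.normSq (L k j i) ≠ 0 := by
        simpa using h0
      have key : ρ i = ρ j * (c k)^2 := by
        have := mul_right_cancel₀ hns (by linarith [hE] : ρ i * Complex.normSq (L k j i)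
          = (ρ j * (c k)^2) * Complex.normSq (L k j i))
        exact this
      have hck' : (c k : ℝ) = Real.sqrt (ρ i) / Real.sqrt (ρ j) := by
        have h1 : Real.sqrt (ρ i) = Real.sqrt (ρ j) * c k := by
          rw [key, Real.sqrt_mul (le_of_lt (hρ j)), Real.sqrt_sq (le_of_lt (hc k))]
        rw [h1, mul_comm, mul_div_assoc, div_self (hsq j), mul_one]
      have : (c k : ℂ) = (Real.sqrt (ρ i) : ℂ) * ((Real.sqrt (ρ j))⁻¹ : ℂ) := by
        rw [hck', Complex.ofReal_div, div_eq_mul_inv]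
      rw [this]; ring
  refine ⟨h1, fun k => ?_⟩
  simp only [ite_smul, one_smul, zero_smul, Finset.sum_ite_eq, Finset.mem_univ, if_true]
  rw [h1 k, Matrix.mul_assoc, Matrix.mul_assoc, Matrix.diagonal_mul_diagonal]
  have hfun : (fun i => ((Real.sqrt (ρ i))⁻¹ : ℂ) * (Real.sqrt (ρ i) : ℂ)) =
      fun _ => (1 : ℂ) := by
    funext i
    exact inv_mul_cancel₀ (by exact_mod_cast hsq i)
  have : (Matrix.diagonal (fun i => ((Real.sqrt (ρ i))⁻¹ : ℂ) * (Real.sqrt (ρ i) : ℂ))) =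
      (1 : Matrix (Fin n) (Fin n) ℂ) := by
    rw [hfun, Matrix.diagonal_one]
  rw [this, Matrix.mul_one]
end

section
/- Let κ be a finite index set with an involution k ↦ k* and involution matrix Δ, let ρ be a positive definite Hermitian n×n matrix with positive semidefinite square root ρ^{1/2}, and let (L_ℓ)_{ℓ∈κ} be n×n matrices satisfying ρ^{1/2} L_k† = Σ_ℓ Δ_{kℓ} L_ℓ ρ^{1/2} (equivalently ρ^{1/2} L_k† = L_{k*} ρ^{1/2}) for all k ∈ κ. If v is a unitary κ×κ matrix with vᵀ Δ v = Δ, and L̃_k := Σ_ℓ v_{kℓ} L_ℓ for each k, then ρ^{1/2} L̃_k† = Σ_ℓ Δ_{kℓ} L̃_ℓ ρ^{1/2} = L̃_{k*} ρ^{1/2} for all k ∈ κ. -/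
open Matrix BigOperators ComplexOrder

/-!
The relation `ρ^{1/2} L_k† = L_{k*} ρ^{1/2}` is conjugate-linear in `L`, so it passes to the
mixtures `L̃_k = ∑_ℓ v_{kℓ} L_ℓ` as soon as the coefficients satisfy `v_{k*ℓ} = conj v_{kℓ*}`.
Writing `Δ` as the permutation matrix of the involution, this is the entrywise form of
`vᵀ Δ = Δ v†`, which follows from `vᵀ Δ v = Δ` by multiplying with `v⁻¹ = v†` on the right.
-/

theorem Function.Involutive.of_ite_eq_toMatrix {κ R : Type*} [DecidableEq κ] [Zero R] [One R]
    {σ : κ → κ} (hσ : Function.Involutive σ) :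
    Matrix.of (fun k ℓ => if σ k = ℓ then (1 : R) else 0) = hσ.toPerm.toPEquiv.toMatrix := by
  ext k ℓ
  simp [PEquiv.toMatrix_apply]

section Mixing

variable {κ R : Type*} [Fintype κ] [CommRing R] [StarRing R]

theorem Matrix.mul_conjTranspose_sum_smul_of_involutive {m : Type*} [Fintype m]
    {σ : κ → κ} (hσ : Function.Involutive σ) {S : Matrix m m R} {L : κ → Matrix m m R}
    (hL : ∀ k, S * (L k)ᴴ = L (σ k) * S) {c d : κ → R} (hcd : ∀ ℓ, d ℓ = star (c (σ ℓ))) :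
    S * (∑ ℓ, c ℓ • L ℓ)ᴴ = (∑ ℓ, d ℓ • L ℓ) * S := by
  simp only [conjTranspose_sum, conjTranspose_smul, Matrix.mul_sum, Matrix.sum_mul,
    mul_smul_comm, hL, smul_mul, hcd]
  exact Fintype.sum_equiv hσ.toPerm _ _ fun ℓ => by simp [hσ ℓ]

variable [DecidableEq κ]

theorem Matrix.transpose_mul_eq_mul_conjTranspose_of_congr {v M : Matrix κ κ R}
    (hv : vᴴ * v = 1) (hM : vᵀ * M * v = M) : vᵀ * M = M * vᴴ := by
  calc vᵀ * M = vᵀ * M * (v * vᴴ) := by rw [mul_eq_one_comm.mp hv, Matrix.mul_one]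
    _ = M * vᴴ := by rw [← Matrix.mul_assoc, hM]

theorem Matrix.apply_involutive_eq_star_of_congr {σ : κ → κ} (hσ : Function.Involutive σ)
    {v : Matrix κ κ R} (hv : vᴴ * v = 1)
    (hvΔ : vᵀ * Matrix.of (fun k ℓ => if σ k = ℓ then (1 : R) else 0) * v =
      Matrix.of (fun k ℓ => if σ k = ℓ then (1 : R) else 0)) (k ℓ : κ) :
    v (σ k) ℓ = star (v k (σ ℓ)) := by
  rw [hσ.of_ite_eq_toMatrix] at hvΔ
  have h := congr_fun₂ (transpose_mul_eq_mul_conjTranspose_of_congr hv hvΔ) ℓ k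
  simpa [PEquiv.mul_toMatrix_toPEquiv, PEquiv.toMatrix_toPEquiv_mul] using h

end Mixing

theorem unitary_mixing_preserves_zero_epr_general
    {n : ℕ} {κ : Type*} [Fintype κ] [DecidableEq κ]
    (invol : κ → κ) (hinvol : ∀ k, invol (invol k) = k)
    (sqrtρ : Matrix (Fin n) (Fin n) ℂ)
    (L : κ → Matrix (Fin n) (Fin n) ℂ)
    (hL : ∀ k, sqrtρ * (L k)ᴴ = L (invol k) * sqrtρ)
    (v : Matrix κ κ ℂ) (hv : vᴴ * v = 1)
    (hvΔ : vᵀ * Matrix.of (fun k ℓ => if invol k = ℓ then (1 : ℂ) else 0) * v =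
      Matrix.of (fun k ℓ => if invol k = ℓ then (1 : ℂ) else 0)) :
    ∀ k, sqrtρ * (∑ ℓ, v k ℓ • L ℓ)ᴴ =
        ∑ ℓ, (if invol k = ℓ then (1 : ℂ) else 0) • ((∑ a, v ℓ a • L a) * sqrtρ) ∧
      sqrtρ * (∑ ℓ, v k ℓ • L ℓ)ᴴ = (∑ ℓ, v (invol k) ℓ • L ℓ) * sqrtρ := by
  intro k
  have hmix : sqrtρ * (∑ ℓ, v k ℓ • L ℓ)ᴴ = (∑ ℓ, v (invol k) ℓ • L ℓ) * sqrtρ :=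
    mul_conjTranspose_sum_smul_of_involutive hinvol hL
      (apply_involutive_eq_star_of_congr hinvol hv hvΔ k)
  refine ⟨?_, hmix⟩
  simp [hmix, ite_smul]

/-- Proposition 4.1: a unitary mixing `v` of the jump operators that preserves the
involution matrix `Δ` under congruence (`vᵀ Δ v = Δ`) preserves the
zero-entropy-production-rate relation `ρ^{1/2} L_k† = L_{k*} ρ^{1/2}`. -/
theorem unitary_mixing_preserves_zero_epr
    {n : ℕ} {κ : Type*} [Fintype κ] [DecidableEq κ]
    (invol : κ → κ) (hinvol : ∀ k, invol (invol k) = k)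
    (ρ sqrtρ : Matrix (Fin n) (Fin n) ℂ)
    (hρ : ρ.PosDef) (hsqrt : sqrtρ.PosSemidef) (hsq : sqrtρ * sqrtρ = ρ)
    (L : κ → Matrix (Fin n) (Fin n) ℂ)
    (hL : ∀ k, sqrtρ * (L k)ᴴ = L (invol k) * sqrtρ)
    (v : Matrix κ κ ℂ) (hv : vᴴ * v = 1)
    (hvΔ : vᵀ * Matrix.of (fun k ℓ => if invol k = ℓ then (1 : ℂ) else 0) * v =
      Matrix.of (fun k ℓ => if invol k = ℓ then (1 : ℂ) else 0)) :
    ∀ k, sqrtρ * (∑ ℓ, v k ℓ • L ℓ)ᴴ =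
        ∑ ℓ, (if invol k = ℓ then (1 : ℂ) else 0) • ((∑ a, v ℓ a • L a) * sqrtρ) ∧
      sqrtρ * (∑ ℓ, v k ℓ • L ℓ)ᴴ = (∑ ℓ, v (invol k) ℓ • L ℓ) * sqrtρ :=
  unitary_mixing_preserves_zero_epr_general invol hinvol sqrtρ L hL v hv hvΔ
end

section
/- Let κ be a finite index set with an involution k ↦ k* and involution matrix Δ. Let (L_ℓ)_{ℓ∈κ} be a linearly independent family of n×n complex matrices that is thermodynamically consistent with respect to strictly positive reals (c_k)_{k∈κ}, i.e. L_{k*} = c_k·L_k† for all k. Let v be a unitary κ×κ matrix and set L̃_k := Σ_ℓ v_{kℓ} L_ℓ. Then, for strictly positive reals (c̃_k)_{k∈κ}, the family (L̃_k) is thermodynamically consistent with respect to (c̃_k) (i.e. L̃_{k*} = c̃_k·L̃_k† for all k) if and only if C vᵀ C̃^{-1} Δ v = Δ, where C = diag(c_k) and C̃ = diag(c̃_k) are the κ×κ diagonal matrices with these entries. -/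
open Matrix BigOperators

/-- Proposition 4.2: the unitarily mixed family `L̃_k := Σ_ℓ v_{kℓ} L_ℓ` is thermodynamically
consistent with respect to `(c̃_k)` if and only if `C vᵀ C̃⁻¹ Δ v = Δ`, where
`C = diag(c_k)`, `C̃ = diag(c̃_k)` and `Δ` is the involution matrix. -/
theorem tc_preserving_unitary_mixing_iff
    {n : ℕ} {κ : Type*} [Fintype κ] [DecidableEq κ]
    (invol : κ → κ) (hinvol : ∀ k, invol (invol k) = k)
    (L : κ → Matrix (Fin n) (Fin n) ℂ) (hLI : LinearIndependent ℂ L)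
    (c : κ → ℝ) (hc : ∀ k, 0 < c k)
    (hTC : ∀ k, L (invol k) = (c k : ℂ) • (L k)ᴴ)
    (v : Matrix κ κ ℂ) (hv : vᴴ * v = 1)
    (ctil : κ → ℝ) (hctil : ∀ k, 0 < ctil k) :
    (∀ k, (∑ ℓ, v (invol k) ℓ • L ℓ) = (ctil k : ℂ) • (∑ ℓ, v k ℓ • L ℓ)ᴴ) ↔
      Matrix.diagonal (fun k => (c k : ℂ)) * vᵀ *
        Matrix.diagonal (fun k => ((ctil k : ℂ))⁻¹) *
        Matrix.of (fun k ℓ => if invol k = ℓ then (1 : ℂ) else 0) * v =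
      Matrix.of (fun k ℓ => if invol k = ℓ then (1 : ℂ) else 0) := by
  classical
  have hcne : ∀ k, (c k : ℂ) ≠ 0 := fun k => by exact_mod_cast (hc k).ne'
  have hctne : ∀ k, (ctil k : ℂ) ≠ 0 := fun k => by exact_mod_cast (hctil k).ne'
  have hinv : Function.Involutive invol := hinvol
  set e : Equiv.Perm κ := Function.Involutive.toPerm invol hinv with he
  have hea : ∀ k, e k = invol k := fun _ => rfl
  set Δ : Matrix κ κ ℂ := Matrix.of (fun k ℓ => if invol k = ℓ then (1 : ℂ) else 0) with hΔ
  -- involution condition as iff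
  have hcond : ∀ (p q : κ), (invol p = q) ↔ (p = invol q) := by
    intro p q
    constructor
    · intro h; rw [← h, hinvol]
    · intro h; rw [h, hinvol]
  -- entry lemmas for Δ
  have hΔmul : ∀ (M : Matrix κ κ ℂ) (k ℓ : κ), (Δ * M) k ℓ = M (invol k) ℓ := by
    intro M k ℓ
    simp only [hΔ, Matrix.mul_apply, Matrix.of_apply, ite_mul, one_mul, zero_mul]
    rw [Finset.sum_ite_eq]
    simp
  have hmulΔ : ∀ (M : Matrix κ κ ℂ) (k ℓ : κ), (M * Δ) k ℓ = M k (invol ℓ) := by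
    intro M k ℓ
    simp only [hΔ, Matrix.mul_apply, Matrix.of_apply]
    have hrw : ∀ p : κ, (if invol p = ℓ then (1 : ℂ) else 0) = (if p = invol ℓ then (1 : ℂ) else 0) := by
      intro p; simp only [hcond p ℓ]
    simp only [hrw, mul_ite, mul_one, mul_zero]
    rw [Finset.sum_ite_eq']
    simp
  -- coefficient comparison from linear independence
  have hcoef : ∀ (a b : κ → ℂ), (∑ ℓ, a ℓ • L ℓ) = (∑ ℓ, b ℓ • L ℓ) ↔ ∀ ℓ, a ℓ = b ℓ := by
    intro a b
    constructor
    · intro h ℓ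
      have h0 : ∑ m, (a m - b m) • L m = 0 := by
        simp only [sub_smul, Finset.sum_sub_distrib, h, sub_self]
      have := Fintype.linearIndependent_iff.mp hLI (fun m => a m - b m) h0 ℓ
      exact sub_eq_zero.mp this
    · intro h
      exact Finset.sum_congr rfl fun ℓ _ => by rw [h ℓ]
  -- the key pointwise condition P
  have hLH : ∀ ℓ, (L ℓ)ᴴ = ((c ℓ : ℂ))⁻¹ • L (invol ℓ) := by
    intro ℓ
    rw [hTC ℓ, smul_smul, inv_mul_cancel₀ (hcne ℓ), one_smul]
  have key : (∀ k, (∑ ℓ, v (invol k) ℓ • L ℓ) = (ctil k : ℂ) • (∑ ℓ, v k ℓ • L ℓ)ᴴ) ↔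
      (∀ k ℓ, v (invol k) ℓ =
        (ctil k : ℂ) * ((c (invol ℓ) : ℂ))⁻¹ * (starRingEnd ℂ) (v k (invol ℓ))) := by
    have hRHS : ∀ k, (ctil k : ℂ) • (∑ ℓ, v k ℓ • L ℓ)ᴴ =
        ∑ ℓ, ((ctil k : ℂ) * ((c (invol ℓ) : ℂ))⁻¹ * (starRingEnd ℂ) (v k (invol ℓ))) • L ℓ := by
      intro k
      rw [Matrix.conjTranspose_sum, Finset.smul_sum]
      have step : ∀ ℓ, (ctil k : ℂ) • (v k ℓ • L ℓ)ᴴ =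
          ((ctil k : ℂ) * ((c ℓ : ℂ))⁻¹ * (starRingEnd ℂ) (v k ℓ)) • L (invol ℓ) := by
        intro ℓ
        rw [Matrix.conjTranspose_smul, hLH ℓ, smul_smul, smul_smul]
        congr 1
        simp only [RCLike.star_def]
        ring
      simp only [step]
      refine Fintype.sum_equiv e _ _ ?_
      intro ℓ
      simp only [hea, hinvol]
    constructor
    · intro h k ℓ
      have := (hcoef _ _).mp ((h k).trans (hRHS k))
      exact this ℓ
    · intro h k
      rw [hRHS k]
      exact (hcoef _ _).mpr fun ℓ => h k ℓ
  rw [key]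
  -- unitary consequences
  have hvvH : v * vᴴ = 1 := mul_eq_one_comm.mp hv
  constructor
  · -- P → matrix equation
    intro hP
    ext a b
    set X := Matrix.diagonal (fun k => (c k : ℂ)) * vᵀ *
      Matrix.diagonal (fun k => ((ctil k : ℂ))⁻¹) with hX
    have hXe : ∀ p, X a p = (c a : ℂ) * v p a * ((ctil p : ℂ))⁻¹ := by
      intro p
      rw [hX, Matrix.mul_diagonal, Matrix.diagonal_mul, Matrix.transpose_apply]
    have e1 : (X * Δ * v) a b = ∑ q, (c a : ℂ) * v (invol q) a * ((ctil (invol q) : ℂ))⁻¹ * v q b := by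
      rw [Matrix.mul_apply]
      refine Finset.sum_congr rfl fun q _ => ?_
      rw [hmulΔ, hXe]
    have e2 : (∑ q, (c a : ℂ) * v (invol q) a * ((ctil (invol q) : ℂ))⁻¹ * v q b)
        = ∑ q, (c a : ℂ) * v q a * ((ctil q : ℂ))⁻¹ * v (invol q) b := by
      refine Fintype.sum_equiv e _ _ ?_
      intro q
      simp only [hea, hinvol]
    have e3 : (∑ q, (c a : ℂ) * v q a * ((ctil q : ℂ))⁻¹ * v (invol q) b)
        = ((c a : ℂ) * ((c (invol b) : ℂ))⁻¹) *
          ∑ q, (starRingEnd ℂ) (v q (invol b)) * v q a := by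
      rw [Finset.mul_sum]
      refine Finset.sum_congr rfl fun q _ => ?_
      rw [hP q b]
      calc (c a : ℂ) * v q a * ((ctil q : ℂ))⁻¹ *
            ((ctil q : ℂ) * ((c (invol b) : ℂ))⁻¹ * (starRingEnd ℂ) (v q (invol b)))
          = (((ctil q : ℂ))⁻¹ * (ctil q : ℂ)) *
            ((c a : ℂ) * ((c (invol b) : ℂ))⁻¹ * ((starRingEnd ℂ) (v q (invol b)) * v q a)) := by
            ring
        _ = (c a : ℂ) * ((c (invol b) : ℂ))⁻¹ * ((starRingEnd ℂ) (v q (invol b)) * v q a) := by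
            rw [inv_mul_cancel₀ (hctne q), one_mul]
    have e4 : (∑ q, (starRingEnd ℂ) (v q (invol b)) * v q a) = (1 : Matrix κ κ ℂ) (invol b) a := by
      rw [← hv, Matrix.mul_apply]
      refine Finset.sum_congr rfl fun q _ => ?_
      rw [Matrix.conjTranspose_apply]
      rfl
    show (X * Δ * v) a b = Δ a b
    rw [e1, e2, e3, e4, Matrix.one_apply]
    by_cases h : invol a = b
    · have hb : invol b = a := by rw [← h, hinvol]
      rw [if_pos hb]
      have hΔab : Δ a b = 1 := by rw [hΔ]; simp [h]
      rw [hΔab, ← h, hinvol, mul_one, mul_inv_cancel₀ (hcne a)]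
    · have hb : invol b ≠ a := fun hh => h (by rw [← hh, hinvol])
      rw [if_neg hb]
      have hΔab : Δ a b = 0 := by rw [hΔ]; simp [h]
      rw [hΔab, mul_zero]
  · -- matrix equation → P
    intro heq k ℓ
    set Dc := Matrix.diagonal (fun k => (c k : ℂ)) with hDc
    set Dci := Matrix.diagonal (fun k => ((c k : ℂ))⁻¹) with hDci
    set Dti := Matrix.diagonal (fun k => ((ctil k : ℂ))⁻¹) with hDti
    set Dt := Matrix.diagonal (fun k => (ctil k : ℂ)) with hDt
    have hDciDc : Dci * Dc = 1 := by
      rw [hDci, hDc, Matrix.diagonal_mul_diagonal]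
      have hfun : (fun i => ((c i : ℂ))⁻¹ * (c i : ℂ)) = fun _ => (1 : ℂ) :=
        funext fun i => inv_mul_cancel₀ (hcne i)
      rw [hfun, Matrix.diagonal_one]
    have hDtDti : Dt * Dti = 1 := by
      rw [hDt, hDti, Matrix.diagonal_mul_diagonal]
      have hfun : (fun i => (ctil i : ℂ) * ((ctil i : ℂ))⁻¹) = fun _ => (1 : ℂ) :=
        funext fun i => mul_inv_cancel₀ (hctne i)
      rw [hfun, Matrix.diagonal_one]
    -- w := conj v
    set w : Matrix κ κ ℂ := vᴴᵀ with hw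
    have hwv : w * vᵀ = 1 := by
      rw [hw, ← Matrix.transpose_mul, hvvH, Matrix.transpose_one]
    -- step 1: vᵀ * Dti * Δ * v = Dci * Δ
    have h1 : vᵀ * Dti * Δ * v = Dci * Δ := by
      calc vᵀ * Dti * Δ * v = (Dci * Dc) * (vᵀ * Dti * Δ * v) := by rw [hDciDc, one_mul]
        _ = Dci * (Dc * vᵀ * Dti * Δ * v) := by simp only [Matrix.mul_assoc]
        _ = Dci * Δ := by rw [heq]
    -- step 2: Dti * Δ * v = w * Dci * Δ
    have h2 : Dti * Δ * v = w * Dci * Δ := by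
      calc Dti * Δ * v = (w * vᵀ) * (Dti * Δ * v) := by rw [hwv, one_mul]
        _ = w * (vᵀ * Dti * Δ * v) := by simp only [Matrix.mul_assoc]
        _ = w * (Dci * Δ) := by rw [h1]
        _ = w * Dci * Δ := by rw [Matrix.mul_assoc]
    -- step 3: Δ * v = Dt * w * Dci * Δ
    have h3 : Δ * v = Dt * w * Dci * Δ := by
      calc Δ * v = (Dt * Dti) * (Δ * v) := by rw [hDtDti, one_mul]
        _ = Dt * (Dti * Δ * v) := by simp only [Matrix.mul_assoc]
        _ = Dt * (w * Dci * Δ) := by rw [h2]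
        _ = Dt * w * Dci * Δ := by simp only [Matrix.mul_assoc]
    have hent := congrFun (congrFun h3 k) ℓ
    rw [hΔmul] at hent
    rw [hmulΔ] at hent
    rw [Matrix.mul_diagonal, Matrix.diagonal_mul] at hent
    rw [hent, hw]
    rw [Matrix.transpose_apply, Matrix.conjTranspose_apply]
    simp only [RCLike.star_def]
    ring
end

section
/- Let κ be a finite index set with an involution k ↦ k* and involution matrix Δ, and let ρ = diag(ρ₁,…,ρ_n) with ρ_i > 0. Let (L_ℓ)_{ℓ∈κ} be a linearly independent family of n×n complex matrices that is thermodynamically consistent with respect to strictly positive reals (c_k) (i.e. L_{k*} = c_k·L_k†) and satisfies ρ^{1/2} L_k† = L_{k*} ρ^{1/2} for all k (vanishing entropy production rate). Let v be a unitary κ×κ matrix, set L̃_k := Σ_ℓ v_{kℓ} L_ℓ, and assume (L̃_k) is thermodynamically consistent with respect to strictly positive reals (c̃_k). Then ρ^{1/2} L̃_k† = L̃_{k*} ρ^{1/2} holds for all k ∈ κ if and only if both vᵀ Δ v = Δ and C vᵀ C̃^{-1} Δ v = Δ hold, where C = diag(c_k) and C̃ = diag(c̃_k). -/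
open Matrix BigOperators

private lemma sum_invol' {κ : Type*} [Fintype κ] {α : Type*} [AddCommMonoid α]
    (invol : κ → κ) (hinvol : ∀ k, invol (invol k) = k) (f : κ → α) :
    ∑ m, f (invol m) = ∑ m, f m :=
  Fintype.sum_equiv (Function.Involutive.toPerm invol hinvol) _ _ (fun _ => rfl)

/-- Corollary 4.3: starting from a linearly independent TC zero-EPR family `(L_k)`, the
unitarily mixed TC family `L̃_k := Σ_ℓ v_{kℓ} L_ℓ` has vanishing EPR if and only if both
`vᵀ Δ v = Δ` and `C vᵀ C̃⁻¹ Δ v = Δ` hold. -/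
theorem tc_zero_epr_unitary_mixing_iff
    {n : ℕ} {κ : Type*} [Fintype κ] [DecidableEq κ]
    (invol : κ → κ) (hinvol : ∀ k, invol (invol k) = k)
    (ρ : Fin n → ℝ) (hρ : ∀ i, 0 < ρ i)
    (L : κ → Matrix (Fin n) (Fin n) ℂ) (hLI : LinearIndependent ℂ L)
    (c : κ → ℝ) (hc : ∀ k, 0 < c k)
    (hTC : ∀ k, L (invol k) = (c k : ℂ) • (L k)ᴴ)
    (hEPR : ∀ k, Matrix.diagonal (fun i => (Real.sqrt (ρ i) : ℂ)) * (L k)ᴴ =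
      L (invol k) * Matrix.diagonal (fun i => (Real.sqrt (ρ i) : ℂ)))
    (v : Matrix κ κ ℂ) (hv : vᴴ * v = 1)
    (ctil : κ → ℝ) (hctil : ∀ k, 0 < ctil k)
    (hTCtil : ∀ k, (∑ ℓ, v (invol k) ℓ • L ℓ) = (ctil k : ℂ) • (∑ ℓ, v k ℓ • L ℓ)ᴴ) :
    (∀ k, Matrix.diagonal (fun i => (Real.sqrt (ρ i) : ℂ)) * (∑ ℓ, v k ℓ • L ℓ)ᴴ =
        (∑ ℓ, v (invol k) ℓ • L ℓ) * Matrix.diagonal (fun i => (Real.sqrt (ρ i) : ℂ))) ↔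
      (vᵀ * Matrix.of (fun k ℓ => if invol k = ℓ then (1 : ℂ) else 0) * v =
          Matrix.of (fun k ℓ => if invol k = ℓ then (1 : ℂ) else 0) ∧
        Matrix.diagonal (fun k => (c k : ℂ)) * vᵀ *
            Matrix.diagonal (fun k => ((ctil k : ℂ))⁻¹) *
            Matrix.of (fun k ℓ => if invol k = ℓ then (1 : ℂ) else 0) * v =
          Matrix.of (fun k ℓ => if invol k = ℓ then (1 : ℂ) else 0)) := by
  set S : Matrix (Fin n) (Fin n) ℂ := Matrix.diagonal (fun i => (Real.sqrt (ρ i) : ℂ)) with hSdef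
  set Δm : Matrix κ κ ℂ := Matrix.of (fun k ℓ => if invol k = ℓ then (1 : ℂ) else 0) with hΔdef
  have hcne : ∀ k, (c k : ℂ) ≠ 0 := fun k => by
    exact_mod_cast Complex.ofReal_ne_zero.mpr (hc k).ne'
  have hctilne : ∀ k, (ctil k : ℂ) ≠ 0 := fun k => by
    exact_mod_cast Complex.ofReal_ne_zero.mpr (hctil k).ne'
  have hLne : ∀ m, L m ≠ 0 := fun m => hLI.ne_zero m
  -- coefficient extraction from linear independence
  have hcoeff : ∀ f g : κ → ℂ, (∑ ℓ, f ℓ • L ℓ) = (∑ ℓ, g ℓ • L ℓ) → ∀ ℓ, f ℓ = g ℓ := by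
    intro f g h ℓ
    have h0 : ∑ m, (f m - g m) • L m = 0 := by
      simp only [sub_smul, Finset.sum_sub_distrib, h, sub_self]
    have := Fintype.linearIndependent_iff.mp hLI (fun m => f m - g m) h0 ℓ
    exact sub_eq_zero.mp this
  -- c (invol m) * c m = 1
  have hcc : ∀ m, (c (invol m) : ℂ) * (c m : ℂ) = 1 := by
    intro m
    have h1 : L m = ((c (invol m) : ℂ) * (c m : ℂ)) • L m := by
      conv_lhs => rw [← hinvol m]
      rw [hTC (invol m), hTC m, conjTranspose_smul, conjTranspose_conjTranspose, smul_smul]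
      congr 1
      simp [Complex.star_def, Complex.conj_ofReal]
    have h2 : (((c (invol m) : ℂ) * (c m : ℂ)) - 1) • L m = 0 := by
      rw [sub_smul, one_smul, ← h1, sub_self]
    rcases smul_eq_zero.mp h2 with h | h
    · exact sub_eq_zero.mp h
    · exact absurd h (hLne m)
  have hcinv : ∀ m, ((c (invol m) : ℂ))⁻¹ = (c m : ℂ) := fun m =>
    inv_eq_of_mul_eq_one_right (hcc m)
  have hLadj : ∀ ℓ, (L ℓ)ᴴ = ((c ℓ : ℂ))⁻¹ • L (invol ℓ) := by
    intro ℓ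
    rw [hTC ℓ, smul_smul, inv_mul_cancel₀ (hcne ℓ), one_smul]
  have hSL : ∀ ℓ, S * (L ℓ)ᴴ = (c ℓ : ℂ) • ((L ℓ)ᴴ * S) := by
    intro ℓ
    rw [hEPR ℓ, hTC ℓ, smul_mul_assoc]
  -- cancellation of S on the right
  have hScancel : ∀ M N : Matrix (Fin n) (Fin n) ℂ, M * S = N * S → M = N := by
    intro M N h
    have hS1 : S * Matrix.diagonal (fun i => ((Real.sqrt (ρ i) : ℂ))⁻¹) = 1 := by
      rw [hSdef, Matrix.diagonal_mul_diagonal]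
      have he : (fun i => (Real.sqrt (ρ i) : ℂ) * ((Real.sqrt (ρ i) : ℂ))⁻¹) =
          fun _ => (1 : ℂ) := funext fun i => mul_inv_cancel₀
        (Complex.ofReal_ne_zero.mpr (Real.sqrt_ne_zero'.mpr (hρ i)))
      rw [he, Matrix.diagonal_one]
    calc M = M * (S * Matrix.diagonal (fun i => ((Real.sqrt (ρ i) : ℂ))⁻¹)) := by
            rw [hS1, mul_one]
      _ = (M * S) * _ := by rw [mul_assoc]
      _ = (N * S) * _ := by rw [h]
      _ = N * (S * _) := by rw [mul_assoc]
      _ = N := by rw [hS1, mul_one]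
  -- key relation from tilde TC
  have hvstar : ∀ k m, v (invol k) m = (ctil k : ℂ) * (c m : ℂ) * star (v k (invol m)) := by
    intro k m
    have h := hTCtil k
    have hrhs : (ctil k : ℂ) • (∑ ℓ, v k ℓ • L ℓ)ᴴ =
        ∑ ℓ, ((ctil k : ℂ) * (star (v k ℓ) * ((c ℓ : ℂ))⁻¹)) • L (invol ℓ) := by
      rw [conjTranspose_sum, Finset.smul_sum]
      refine Finset.sum_congr rfl (fun ℓ _ => ?_)
      rw [conjTranspose_smul, hLadj ℓ, smul_smul, smul_smul, mul_assoc]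
    rw [hrhs] at h
    have hre : ∑ ℓ, ((ctil k : ℂ) * (star (v k ℓ) * ((c ℓ : ℂ))⁻¹)) • L (invol ℓ) =
        ∑ ℓ, ((ctil k : ℂ) * (star (v k (invol ℓ)) * ((c (invol ℓ) : ℂ))⁻¹)) • L ℓ := by
      rw [← sum_invol' invol hinvol
        (fun ℓ => ((ctil k : ℂ) * (star (v k (invol ℓ)) * ((c (invol ℓ) : ℂ))⁻¹)) • L ℓ)]
      simp [hinvol]
    rw [hre] at h
    have := hcoeff _ _ h m
    rw [this, hcinv]
    ring
  -- unitarity entrywise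
  have hu1 : ∀ p q, ∑ a, star (v a p) * v a q = if p = q then (1 : ℂ) else 0 := by
    intro p q
    have h := congrFun (congrFun hv p) q
    rw [Matrix.mul_apply, Matrix.one_apply] at h
    simpa only [Matrix.conjTranspose_apply] using h
  have hv2 : v * vᴴ = 1 := mul_eq_one_comm.mp hv
  have hu2 : ∀ p q, ∑ a, v p a * star (v q a) = if p = q then (1 : ℂ) else 0 := by
    intro p q
    have h := congrFun (congrFun hv2 p) q
    rw [Matrix.mul_apply, Matrix.one_apply] at h
    simpa only [Matrix.conjTranspose_apply] using h
  have hu1' : ∀ p q, ∑ a, v a p * star (v a q) = if p = q then (1 : ℂ) else 0 := by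
    intro p q
    have h : (∑ a, v a p * star (v a q)) = star (∑ a, star (v a p) * v a q) := by
      rw [star_sum]
      exact Finset.sum_congr rfl (fun a _ => by rw [star_mul', star_star])
    rw [h, hu1 p q, apply_ite star, star_one, star_zero]
  -- multiplication by Δ on the right
  have hΔmul : ∀ (M : Matrix κ κ ℂ) k b, (M * Δm) k b = M k (invol b) := by
    intro M k b
    rw [Matrix.mul_apply]
    simp only [hΔdef, Matrix.of_apply]
    rw [← sum_invol' invol hinvol (fun a => M k a * (if invol a = b then (1 : ℂ) else 0))]
    simp [hinvol]
  -- the two sides of the EPR condition for the mixed family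
  have hLHSk : ∀ k, S * (∑ ℓ, v k ℓ • L ℓ)ᴴ =
      ∑ ℓ, ((c ℓ : ℂ) * star (v k ℓ)) • ((L ℓ)ᴴ * S) := by
    intro k
    rw [conjTranspose_sum, Finset.mul_sum]
    refine Finset.sum_congr rfl (fun ℓ _ => ?_)
    rw [conjTranspose_smul, Matrix.mul_smul, hSL ℓ, smul_smul, mul_comm]
  have hRHSk : ∀ k, (∑ ℓ, v (invol k) ℓ • L ℓ) * S =
      ∑ ℓ, ((ctil k : ℂ) * star (v k ℓ)) • ((L ℓ)ᴴ * S) := by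
    intro k
    rw [hTCtil k, conjTranspose_sum, Finset.smul_sum, Finset.sum_mul]
    refine Finset.sum_congr rfl (fun ℓ _ => ?_)
    rw [conjTranspose_smul, smul_smul, smul_mul_assoc]
  -- the main equivalence with the scalar condition E
  have hE : (∀ k, S * (∑ ℓ, v k ℓ • L ℓ)ᴴ = (∑ ℓ, v (invol k) ℓ • L ℓ) * S) ↔
      (∀ k ℓ, (ctil k : ℂ) * v k ℓ = (c ℓ : ℂ) * v k ℓ) := by
    constructor
    · intro h k ℓ0
      have h1 := (hLHSk k).symm.trans ((h k).trans (hRHSk k))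
      -- rewrite both sides as (∑ ...) * S and cancel S
      have h2 : (∑ ℓ, ((c ℓ : ℂ) * star (v k ℓ)) • (L ℓ)ᴴ) * S =
          (∑ ℓ, ((ctil k : ℂ) * star (v k ℓ)) • (L ℓ)ᴴ) * S := by
        rw [Finset.sum_mul, Finset.sum_mul]
        simpa only [smul_mul_assoc] using h1
      have h3 := hScancel _ _ h2
      have h4 : (∑ ℓ, ((c ℓ : ℂ) * star (v k ℓ) * ((c ℓ : ℂ))⁻¹) • L (invol ℓ)) =
          (∑ ℓ, ((ctil k : ℂ) * star (v k ℓ) * ((c ℓ : ℂ))⁻¹) • L (invol ℓ)) := by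
        have e1 : ∀ (d : κ → ℂ), (∑ ℓ, d ℓ • (L ℓ)ᴴ) =
            ∑ ℓ, (d ℓ * ((c ℓ : ℂ))⁻¹) • L (invol ℓ) := by
          intro d
          refine Finset.sum_congr rfl (fun ℓ _ => ?_)
          rw [hLadj ℓ, smul_smul]
        rw [← e1, ← e1, h3]
      have h5 : (∑ m, ((c (invol m) : ℂ) * star (v k (invol m)) * ((c (invol m) : ℂ))⁻¹) • L m) =
          (∑ m, ((ctil k : ℂ) * star (v k (invol m)) * ((c (invol m) : ℂ))⁻¹) • L m) := by
        rw [← sum_invol' invol hinvol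
          (fun m => ((c (invol m) : ℂ) * star (v k (invol m)) * ((c (invol m) : ℂ))⁻¹) • L m),
          ← sum_invol' invol hinvol
          (fun m => ((ctil k : ℂ) * star (v k (invol m)) * ((c (invol m) : ℂ))⁻¹) • L m)]
        simpa [hinvol] using h4
      have h6 := hcoeff _ _ h5 (invol ℓ0)
      rw [hinvol] at h6
      -- h6 : c ℓ0 * star (v k ℓ0) * (c ℓ0)⁻¹ = ctil k * star (v k ℓ0) * (c ℓ0)⁻¹
      have h7 : (c ℓ0 : ℂ) * star (v k ℓ0) = (ctil k : ℂ) * star (v k ℓ0) := by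
        have := mul_right_cancel₀ (inv_ne_zero (hcne ℓ0)) h6
        exact this
      have h8 := congrArg star h7
      simp only [star_mul', star_star] at h8
      simp only [Complex.star_def, Complex.conj_ofReal] at h8
      exact h8.symm
    · intro hE k
      rw [hLHSk k, hRHSk k]
      refine Finset.sum_congr rfl (fun ℓ _ => ?_)
      congr 1
      have h := congrArg star (hE k ℓ)
      simp only [star_mul'] at h
      simp only [Complex.star_def, Complex.conj_ofReal] at h
      simp only [Complex.star_def]
      exact h.symm
  rw [hE]
  -- condition B holds unconditionally
  have hB : Matrix.diagonal (fun k => (c k : ℂ)) * vᵀ *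
      Matrix.diagonal (fun k => ((ctil k : ℂ))⁻¹) * Δm * v = Δm := by
    ext k ℓ
    rw [Matrix.mul_apply]
    have hentry : ∀ b, (Matrix.diagonal (fun k => (c k : ℂ)) * vᵀ *
        Matrix.diagonal (fun k => ((ctil k : ℂ))⁻¹) * Δm) k b =
        (c k : ℂ) * v (invol b) k * ((ctil (invol b) : ℂ))⁻¹ := by
      intro b
      rw [hΔmul, Matrix.mul_diagonal, Matrix.diagonal_mul, Matrix.transpose_apply]
    calc (∑ b, (Matrix.diagonal (fun k => (c k : ℂ)) * vᵀ *
          Matrix.diagonal (fun k => ((ctil k : ℂ))⁻¹) * Δm) k b * v b ℓ)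
        = ∑ b, (c k : ℂ) * v (invol b) k * ((ctil (invol b) : ℂ))⁻¹ * v b ℓ := by
          exact Finset.sum_congr rfl (fun b _ => by rw [hentry b])
      _ = ∑ a, (c k : ℂ) * v a k * ((ctil a : ℂ))⁻¹ * v (invol a) ℓ := by
          rw [← sum_invol' invol hinvol
            (fun a => (c k : ℂ) * v a k * ((ctil a : ℂ))⁻¹ * v (invol a) ℓ)]
          simp [hinvol]
      _ = ∑ a, (c k : ℂ) * (c ℓ : ℂ) * (v a k * star (v a (invol ℓ))) := by
          refine Finset.sum_congr rfl (fun a _ => ?_)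
          rw [hvstar a ℓ]
          have hne := hctilne a
          field_simp
      _ = (c k : ℂ) * (c ℓ : ℂ) * (if k = invol ℓ then (1 : ℂ) else 0) := by
          rw [← Finset.mul_sum, hu1']
      _ = Δm k ℓ := by
          by_cases h : invol k = ℓ
          · subst h
            have h1 : (c k : ℂ) * (c (invol k) : ℂ) = 1 := by
              have := hcc (invol k); rwa [hinvol] at this
            rw [if_pos ((hinvol k).symm : k = invol (invol k)), mul_one, h1]
            simp [hΔdef]
          · have hk : ¬ (k = invol ℓ) := fun hc' => h (by rw [hc', hinvol])
            rw [if_neg hk, mul_zero]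
            simp [hΔdef, h]
  -- condition A is equivalent to E
  have hAentry : ∀ k ℓ, (vᵀ * Δm * v) k ℓ = ∑ b, v (invol b) k * v b ℓ := by
    intro k ℓ
    rw [Matrix.mul_apply]
    refine Finset.sum_congr rfl (fun b _ => ?_)
    rw [hΔmul, Matrix.transpose_apply]
  constructor
  · -- E → A ∧ B
    intro hEc
    refine ⟨?_, hB⟩
    ext k ℓ
    rw [hAentry]
    calc (∑ b, v (invol b) k * v b ℓ)
        = ∑ b, (ctil b : ℂ) * (c k : ℂ) * star (v b (invol k)) * v b ℓ := by
          exact Finset.sum_congr rfl (fun b _ => by rw [hvstar b k])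
      _ = ∑ b, (c k : ℂ) * (star (v b (invol k)) * ((ctil b : ℂ) * v b ℓ)) := by
          refine Finset.sum_congr rfl (fun b _ => ?_); ring
      _ = ∑ b, (c k : ℂ) * (c ℓ : ℂ) * (star (v b (invol k)) * v b ℓ) := by
          refine Finset.sum_congr rfl (fun b _ => ?_)
          rw [hEc b ℓ]; ring
      _ = (c k : ℂ) * (c ℓ : ℂ) * (if invol k = ℓ then (1 : ℂ) else 0) := by
          rw [← Finset.mul_sum, hu1]
      _ = Δm k ℓ := by
          by_cases h : invol k = ℓ
          · subst h
            have h1 : (c k : ℂ) * (c (invol k) : ℂ) = 1 := by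
              have := hcc (invol k); rwa [hinvol] at this
            rw [if_pos rfl, mul_one, h1]
            simp [hΔdef]
          · rw [if_neg h, mul_zero]
            simp [hΔdef, h]
  · -- A ∧ B → E
    rintro ⟨hA, -⟩ b0 ℓ
    -- entrywise A with hvstar gives M k l = c k * δ
    have hM : ∀ k l, (∑ b, (ctil b : ℂ) * (star (v b k) * v b l)) =
        if k = l then (c k : ℂ) else 0 := by
      intro k l
      have h := congrFun (congrFun hA (invol k)) l
      rw [hAentry] at h
      have h1 : (∑ b, v (invol b) (invol k) * v b l) =
          (c (invol k) : ℂ) * ∑ b, (ctil b : ℂ) * (star (v b k) * v b l) := by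
        rw [Finset.mul_sum]
        refine Finset.sum_congr rfl (fun b _ => ?_)
        rw [hvstar b (invol k), hinvol]
        ring
      rw [h1] at h
      have h2 : Δm (invol k) l = if k = l then (1 : ℂ) else 0 := by
        simp only [hΔdef, Matrix.of_apply, hinvol]
      rw [h2] at h
      by_cases hkl : k = l
      · subst hkl
        simp only [eq_self_iff_true, if_true] at h ⊢
        have h3 : (∑ b, (ctil b : ℂ) * (star (v b k) * v b k)) = ((c (invol k) : ℂ))⁻¹ :=
          eq_inv_of_mul_eq_one_left (by rw [mul_comm]; exact h)
        rw [h3]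
        exact hcinv k
      · simp only [if_neg hkl] at h ⊢
        exact (mul_eq_zero.mp h).resolve_left (hcne (invol k))
    -- now extract E using unitarity (v * vᴴ = 1)
    have key : (∑ k, v b0 k * ∑ b, (ctil b : ℂ) * (star (v b k) * v b ℓ)) =
        (c ℓ : ℂ) * v b0 ℓ := by
      calc (∑ k, v b0 k * ∑ b, (ctil b : ℂ) * (star (v b k) * v b ℓ))
          = ∑ k, v b0 k * (if k = ℓ then (c k : ℂ) else 0) := by
            exact Finset.sum_congr rfl (fun k _ => by rw [hM k ℓ])
        _ = (c ℓ : ℂ) * v b0 ℓ := by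
            simp [Finset.sum_ite_eq', mul_comm]
    have key2 : (∑ k, v b0 k * ∑ b, (ctil b : ℂ) * (star (v b k) * v b ℓ)) =
        (ctil b0 : ℂ) * v b0 ℓ := by
      calc (∑ k, v b0 k * ∑ b, (ctil b : ℂ) * (star (v b k) * v b ℓ))
          = ∑ k, ∑ b, v b0 k * ((ctil b : ℂ) * (star (v b k) * v b ℓ)) := by
            exact Finset.sum_congr rfl (fun k _ => Finset.mul_sum _ _ _)
        _ = ∑ b, ∑ k, v b0 k * ((ctil b : ℂ) * (star (v b k) * v b ℓ)) :=
            Finset.sum_comm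
        _ = ∑ b, (ctil b : ℂ) * v b ℓ * (∑ k, v b0 k * star (v b k)) := by
            refine Finset.sum_congr rfl (fun b _ => ?_)
            rw [Finset.mul_sum]
            exact Finset.sum_congr rfl (fun k _ => by ring)
        _ = ∑ b, (ctil b : ℂ) * v b ℓ * (if b0 = b then (1 : ℂ) else 0) := by
            exact Finset.sum_congr rfl (fun b _ => by rw [hu2 b0 b])
        _ = (ctil b0 : ℂ) * v b0 ℓ := by
            simp [Finset.sum_ite_eq]
    rw [key] at key2
    exact key2.symm
end

section
/- Let ρ be a positive definite Hermitian n×n matrix, H a Hermitian n×n matrix, and (L_ℓ)_{ℓ∈κ} a finite family of n×n matrices. Define the dissipative part D(x) := −(1/2)·Σ_ℓ (L_ℓ†L_ℓ x − 2 L_ℓ† x L_ℓ + x L_ℓ†L_ℓ) and the generator L(x) := i(Hx − xH) + D(x). Assume (i) D is symmetric with respect to the inner product (x,y)_ρ = Tr(ρ^{1/2} x† ρ^{1/2} y), i.e. (x, D(y))_ρ = (D(x), y)_ρ for all matrices x, y; and (ii) ρ is invariant: −i(Hρ − ρH) + Σ_ℓ (L_ℓ ρ L_ℓ† − (1/2)(L_ℓ†L_ℓ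 ρ + ρ L_ℓ†L_ℓ)) = 0. Then, defining L'(x) := −i(Hx − xH) + D(x), one has (x, L(y))_ρ = (L'(x), y)_ρ for all matrices x, y, and L(x) − L'(x) = 2i(Hx − xH) for all x; that is, the generator satisfies the standard quantum detailed balance condition with K = H. -/
open Matrix BigOperators ComplexOrder

lemma aux_zero_of_trace {p q : Type*} [Fintype p] [Fintype q]
    {M : Matrix p q ℂ} (h : (M * Mᴴ).trace = 0) : M = 0 := by
  have h' : ∑ i, ∑ j, (Complex.normSq (M i j) : ℂ) = 0 := by
    simpa [Matrix.trace, Matrix.diag, Matrix.mul_apply, Matrix.conjTranspose_apply,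
      Complex.mul_conj] using h
  have h'' : ∑ i, ∑ j, Complex.normSq (M i j) = 0 := by exact_mod_cast h'
  ext i j
  have hi := (Finset.sum_eq_zero_iff_of_nonneg (fun i _ => Finset.sum_nonneg
    (fun j _ => Complex.normSq_nonneg _))).mp h'' i (Finset.mem_univ i)
  have hj := (Finset.sum_eq_zero_iff_of_nonneg (fun j _ => Complex.normSq_nonneg _)).mp hi
    j (Finset.mem_univ j)
  simpa using Complex.normSq_eq_zero.mp hj

lemma aux_commute_sqrt {m : Type*} [Fintype m] [DecidableEq m]
    {B H : Matrix m m ℂ} (hB : B.PosSemidef) (h : H * (B * B) = (B * B) * H) :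
    H * B = B * H := by
  set U : Matrix m m ℂ := (hB.1.eigenvectorUnitary : Matrix m m ℂ) with hU
  have hUU : U * star U = 1 := (Matrix.mem_unitaryGroup_iff).mp hB.1.eigenvectorUnitary.2
  have hUU' : star U * U = 1 := (Matrix.mem_unitaryGroup_iff').mp hB.1.eigenvectorUnitary.2
  set d : m → ℂ := RCLike.ofReal ∘ hB.1.eigenvalues with hd
  have hspec : B = U * diagonal d * star U := hB.1.spectral_theorem
  set H' : Matrix m m ℂ := star U * H * U with hH'
  have hBB : B * B = U * diagonal (fun i => d i * d i) * star U := by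
    rw [hspec]
    calc (U * diagonal d * star U) * (U * diagonal d * star U)
        = U * (diagonal d * ((star U * U) * (diagonal d * star U))) := by
          simp only [mul_assoc]
      _ = U * diagonal (fun i => d i * d i) * star U := by
          rw [hUU', one_mul]; simp only [← mul_assoc, diagonal_mul_diagonal]
  have h2 : star U * (H * (U * diagonal (fun i => d i * d i) * star U)) * U
      = star U * ((U * diagonal (fun i => d i * d i) * star U) * H) * U := by
    rw [← hBB, h]
  have e1 : star U * (H * (U * diagonal (fun i => d i * d i) * star U)) * U
      = H' * diagonal (fun i => d i * d i) := by
    calc star U * (H * (U * diagonal (fun i => d i * d i) * star U)) * U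
        = (star U * H * U) * diagonal (fun i => d i * d i) * (star U * U) := by
          simp only [mul_assoc]
      _ = H' * diagonal (fun i => d i * d i) := by rw [hUU', mul_one, hH']
  have e2 : star U * ((U * diagonal (fun i => d i * d i) * star U) * H) * U
      = diagonal (fun i => d i * d i) * H' := by
    calc star U * ((U * diagonal (fun i => d i * d i) * star U) * H) * U
        = (star U * U) * (diagonal (fun i => d i * d i) * (star U * H * U)) := by
          simp only [mul_assoc]
      _ = diagonal (fun i => d i * d i) * H' := by rw [hUU', one_mul, hH', ← mul_assoc]
  have hcomm2 : H' * diagonal (fun i => d i * d i) = diagonal (fun i => d i * d i) * H' := by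
    rw [← e1, ← e2, h2]
  have hdd : ∀ i j, H' i j * d j = d i * H' i j := by
    intro i j
    have hij : H' i j * (d j * d j) = (d i * d i) * H' i j := by
      simpa [mul_diagonal, diagonal_mul] using congrFun (congrFun hcomm2 i) j
    by_cases h0 : H' i j = 0
    · simp [h0]
    · have hsq : d j * d j = d i * d i := by
        have h2' : H' i j * (d j * d j) = H' i j * (d i * d i) := by
          rw [hij, mul_comm]
        exact mul_left_cancel₀ h0 h2'
      have hreal : hB.1.eigenvalues j * hB.1.eigenvalues j
          = hB.1.eigenvalues i * hB.1.eigenvalues i := by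
        have : ((hB.1.eigenvalues j * hB.1.eigenvalues j : ℝ) : ℂ)
            = ((hB.1.eigenvalues i * hB.1.eigenvalues i : ℝ) : ℂ) := by
          push_cast; simpa [hd] using hsq
        exact_mod_cast this
      have hnn : ∀ k, 0 ≤ hB.1.eigenvalues k := fun k => hB.eigenvalues_nonneg k
      have heq : hB.1.eigenvalues j = hB.1.eigenvalues i := by
        nlinarith [hnn i, hnn j, sq_nonneg (hB.1.eigenvalues i - hB.1.eigenvalues j),
          sq_nonneg (hB.1.eigenvalues i + hB.1.eigenvalues j)]
      have : d j = d i := by simp [hd, heq]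
      rw [this, mul_comm]
  have hcomm1 : H' * diagonal d = diagonal d * H' := by
    ext i j
    rw [mul_diagonal, diagonal_mul]
    exact hdd i j
  have hHU : H = U * H' * star U := by
    calc H = (U * star U) * H * (U * star U) := by rw [hUU]; simp
      _ = U * H' * star U := by rw [hH']; simp only [mul_assoc]
  calc H * B = (U * H' * star U) * (U * diagonal d * star U) := by rw [← hHU, ← hspec]
    _ = U * (H' * ((star U * U) * (diagonal d * star U))) := by simp only [mul_assoc]
    _ = U * (H' * diagonal d) * star U := by rw [hUU', one_mul]; simp only [mul_assoc]
    _ = U * (diagonal d * H') * star U := by rw [hcomm1]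
    _ = U * (diagonal d * ((star U * U) * (H' * star U))) := by
        rw [hUU', one_mul]; simp only [mul_assoc]
    _ = (U * diagonal d * star U) * (U * H' * star U) := by simp only [mul_assoc]
    _ = B * H := by rw [← hHU, ← hspec]

lemma per_term {m : Type*} [Fintype m] (K ρ y : Matrix m m ℂ) :
    ((K * ρ * Kᴴ - (1/2 : ℂ) • (Kᴴ * K * ρ + ρ * (Kᴴ * K))) * y).trace
      = (ρ * (Kᴴ * K * y - (2:ℂ) • (Kᴴ * y * K) + y * (Kᴴ * K))).trace * (-(1/2 : ℂ)) := by
  have c1 : (ρ * (Kᴴ * y * K)).trace = (K * ρ * Kᴴ * y).trace := by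
    calc (ρ * (Kᴴ * y * K)).trace = ((ρ * Kᴴ * y) * K).trace := by simp only [mul_assoc]
      _ = (K * (ρ * Kᴴ * y)).trace := trace_mul_comm _ _
      _ = (K * ρ * Kᴴ * y).trace := by simp only [mul_assoc]
  have c2 : (ρ * (y * (Kᴴ * K))).trace = (Kᴴ * K * ρ * y).trace := by
    calc (ρ * (y * (Kᴴ * K))).trace = ((ρ * y) * (Kᴴ * K)).trace := by simp only [mul_assoc]
      _ = ((Kᴴ * K) * (ρ * y)).trace := trace_mul_comm _ _
      _ = (Kᴴ * K * ρ * y).trace := by simp only [mul_assoc]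
  have c3 : (ρ * (Kᴴ * K * y)).trace = (ρ * (Kᴴ * K) * y).trace := by
    simp only [mul_assoc]
  simp only [Matrix.sub_mul, Matrix.smul_mul, Matrix.add_mul, Matrix.mul_sub, Matrix.mul_add,
    mul_smul_comm, trace_sub, trace_add, trace_smul, smul_eq_mul] at *
  rw [c1, c2, c3]
  ring

/-- Proposition 4.5: if the dissipative part `D` of the Lindblad generator
`L(x) = i[H,x] + D(x)` is symmetric with respect to the inner product
`(x,y)_ρ = Tr(ρ^{1/2} x† ρ^{1/2} y)` and `ρ` is invariant, then the generator satisfies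
the standard quantum detailed balance condition with `L'(x) = −i[H,x] + D(x)` and `K = H`. -/
theorem symmetric_dissipative_part_implies_sqdb
    {n : ℕ} {κ : Type*} [Fintype κ]
    (ρ sqrtρ H : Matrix (Fin n) (Fin n) ℂ)
    (hρ : ρ.PosDef) (hsqrt : sqrtρ.PosSemidef) (hsq : sqrtρ * sqrtρ = ρ)
    (hH : Hᴴ = H)
    (L : κ → Matrix (Fin n) (Fin n) ℂ)
    (D : Matrix (Fin n) (Fin n) ℂ → Matrix (Fin n) (Fin n) ℂ)
    (hD : ∀ x, D x = -(1 / 2 : ℂ) •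
      ∑ ℓ, ((L ℓ)ᴴ * L ℓ * x - (2 : ℂ) • ((L ℓ)ᴴ * x * L ℓ) + x * ((L ℓ)ᴴ * L ℓ)))
    (hsym : ∀ x y, (sqrtρ * xᴴ * sqrtρ * D y).trace = (sqrtρ * (D x)ᴴ * sqrtρ * y).trace)
    (hinvρ : -Complex.I • (H * ρ - ρ * H) +
      ∑ ℓ, (L ℓ * ρ * (L ℓ)ᴴ - (1 / 2 : ℂ) • ((L ℓ)ᴴ * L ℓ * ρ + ρ * ((L ℓ)ᴴ * L ℓ))) = 0) :
    (∀ x y, (sqrtρ * xᴴ * sqrtρ * (Complex.I • (H * y - y * H) + D y)).trace =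
        (sqrtρ * (-Complex.I • (H * x - x * H) + D x)ᴴ * sqrtρ * y).trace) ∧
    (∀ x, (Complex.I • (H * x - x * H) + D x) - (-Complex.I • (H * x - x * H) + D x) =
        (2 * Complex.I) • (H * x - x * H)) := by
  have hD1 : D 1 = 0 := by
    rw [hD]
    rw [Finset.sum_eq_zero, smul_zero]
    intro ℓ _
    simp only [mul_one, one_mul, two_smul]
    abel
  have h0 : ∀ y, (ρ * D y).trace = 0 := by
    intro y
    have h1 := hsym 1 y
    rw [hD1] at h1
    simpa [← hsq, mul_assoc] using h1
  set M : Matrix (Fin n) (Fin n) ℂ :=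
    ∑ ℓ, (L ℓ * ρ * (L ℓ)ᴴ - (1 / 2 : ℂ) • ((L ℓ)ᴴ * L ℓ * ρ + ρ * ((L ℓ)ᴴ * L ℓ))) with hM
  have key : ∀ y, (M * y).trace = (ρ * D y).trace := by
    intro y
    rw [hD y, mul_smul_comm, trace_smul, Matrix.mul_sum, trace_sum, hM,
      Matrix.sum_mul, trace_sum, Finset.smul_sum]
    refine Finset.sum_congr rfl fun ℓ _ => ?_
    rw [per_term (L ℓ) ρ y, smul_eq_mul]
    ring
  have hM0 : M = 0 := by
    apply aux_zero_of_trace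
    rw [key Mᴴ, h0]
  have hρH : H * ρ = ρ * H := by
    rw [hM0, add_zero] at hinvρ
    rcases smul_eq_zero.mp hinvρ with h | h
    · exact absurd (neg_eq_zero.mp h) Complex.I_ne_zero
    · exact sub_eq_zero.mp h
  have hc : sqrtρ * H = H * sqrtρ :=
    (aux_commute_sqrt hsqrt (by rw [hsq]; exact hρH)).symm
  constructor
  · intro x y
    have hadj : (-Complex.I • (H * x - x * H) + D x)ᴴ
        = Complex.I • (xᴴ * H - H * xᴴ) + (D x)ᴴ := by
      simp [conjTranspose_add, conjTranspose_smul, conjTranspose_sub, conjTranspose_mul, hH,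
        Complex.star_def, Complex.conj_I]
    rw [hadj, Matrix.mul_add, trace_add, Matrix.mul_add, Matrix.add_mul, Matrix.add_mul,
      trace_add]
    refine congrArg₂ (· + ·) ?_ (hsym x y)
    rw [mul_smul_comm, trace_smul, mul_smul_comm, smul_mul_assoc, smul_mul_assoc, trace_smul]
    refine congrArg (fun t => Complex.I • t) ?_
    rw [Matrix.mul_sub, trace_sub, Matrix.mul_sub, Matrix.sub_mul, Matrix.sub_mul, trace_sub]
    refine congrArg₂ (· - ·) ?_ ?_
    · apply congrArg Matrix.trace
      have swap : ∀ z, sqrtρ * (H * z) = H * (sqrtρ * z) := fun z => by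
        rw [← mul_assoc, hc, mul_assoc]
      simp only [mul_assoc, swap]
    · calc (sqrtρ * xᴴ * sqrtρ * (y * H)).trace
          = ((sqrtρ * xᴴ * sqrtρ * y) * H).trace := by simp only [mul_assoc]
        _ = (H * (sqrtρ * xᴴ * sqrtρ * y)).trace := trace_mul_comm _ _
        _ = (sqrtρ * (H * xᴴ) * sqrtρ * y).trace := by
            apply congrArg Matrix.trace
            simp only [← mul_assoc, hc]
  · intro x
    rw [two_mul, add_smul, neg_smul]
    abel
end

section
/- Let κ be a finite index set with an involution k ↦ k* and involution matrix Δ. Let C = diag(c_k) and C̃ = diag(c̃_k) be κ×κ diagonal matrices with strictly positive real diagonal entries, and let v be a unitary κ×κ matrix satisfying both vᵀ Δ v = Δ and C vᵀ C̃^{-1} Δ v = Δ. Then C = vᵀ C̃ (vᵀ)^{-1}; in particular C and C̃ are similar matrices, so the multisets of values {c_k}_{k∈κ} and {c̃_k}_{k∈κ} coincide. -/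
open Matrix BigOperators Polynomial

section Aux

variable {n : Type*} [Fintype n] [DecidableEq n]

lemma charpoly_diagonal' (d : n → ℂ) :
    (Matrix.diagonal d).charpoly = ∏ i, (X - C (d i)) := by
  have h : charmatrix (Matrix.diagonal d) = Matrix.diagonal (fun i => (X : ℂ[X]) - C (d i)) := by
    ext i j
    by_cases hij : i = j
    · subst hij; simp
    · simp [charmatrix_apply_ne _ _ _ hij, Matrix.diagonal_apply_ne _ hij]
  rw [Matrix.charpoly, h, Matrix.det_diagonal]

lemma charpoly_conj' (P A : Matrix n n ℂ) (hP : IsUnit P) :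
    (P * A * P⁻¹).charpoly = A.charpoly := by
  have hdet : IsUnit P.det := (Matrix.isUnit_iff_isUnit_det P).mp hP
  have hinv : P * P⁻¹ = 1 := Matrix.mul_nonsing_inv P hdet
  have hinv' : P⁻¹ * P = 1 := Matrix.nonsing_inv_mul P hdet
  have comm : (Matrix.scalar n (X : ℂ[X])) * ((C : ℂ →+* ℂ[X]).mapMatrix P) =
      ((C : ℂ →+* ℂ[X]).mapMatrix P) * Matrix.scalar n (X : ℂ[X]) :=
    (Matrix.scalar_commute (X : ℂ[X]) (fun r' => Commute.all X r') _).eq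
  have key : charmatrix (P * A * P⁻¹) =
      ((C : ℂ →+* ℂ[X]).mapMatrix P) * charmatrix A * ((C : ℂ →+* ℂ[X]).mapMatrix P⁻¹) := by
    simp only [charmatrix, mul_sub, sub_mul]
    congr 1
    · calc Matrix.scalar n (X : ℂ[X])
          = Matrix.scalar n (X : ℂ[X]) *
            (((C : ℂ →+* ℂ[X]).mapMatrix P) * ((C : ℂ →+* ℂ[X]).mapMatrix P⁻¹)) := by
            rw [← RingHom.map_mul, hinv, RingHom.map_one, mul_one]
        _ = ((C : ℂ →+* ℂ[X]).mapMatrix P) * Matrix.scalar n (X : ℂ[X]) *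
            ((C : ℂ →+* ℂ[X]).mapMatrix P⁻¹) := by rw [← mul_assoc, comm]
    · rw [RingHom.map_mul, RingHom.map_mul, mul_assoc]
  rw [Matrix.charpoly, Matrix.charpoly, key, Matrix.det_mul, Matrix.det_mul, mul_comm,
    ← mul_assoc, ← Matrix.det_mul, ← RingHom.map_mul, hinv', RingHom.map_one, Matrix.det_one,
    one_mul]

end Aux

/-- Remark after Corollary 4.3: if a unitary `v` satisfies both `vᵀ Δ v = Δ` and
`C vᵀ C̃⁻¹ Δ v = Δ`, then `C = vᵀ C̃ (vᵀ)⁻¹`; in particular the diagonal matrices `C` and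
`C̃` are similar, so the multisets of coefficients `{c_k}` and `{c̃_k}` coincide. -/
theorem tc_coefficients_coincide
    {κ : Type*} [Fintype κ] [DecidableEq κ]
    (invol : κ → κ) (hinvol : ∀ k, invol (invol k) = k)
    (c ctil : κ → ℝ) (hc : ∀ k, 0 < c k) (hctil : ∀ k, 0 < ctil k)
    (v : Matrix κ κ ℂ) (hv : vᴴ * v = 1)
    (h1 : vᵀ * Matrix.of (fun k ℓ => if invol k = ℓ then (1 : ℂ) else 0) * v =
      Matrix.of (fun k ℓ => if invol k = ℓ then (1 : ℂ) else 0))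
    (h2 : Matrix.diagonal (fun k => (c k : ℂ)) * vᵀ *
        Matrix.diagonal (fun k => ((ctil k : ℂ))⁻¹) *
        Matrix.of (fun k ℓ => if invol k = ℓ then (1 : ℂ) else 0) * v =
      Matrix.of (fun k ℓ => if invol k = ℓ then (1 : ℂ) else 0)) :
    Matrix.diagonal (fun k => (c k : ℂ)) =
      vᵀ * Matrix.diagonal (fun k => (ctil k : ℂ)) * (vᵀ)⁻¹ ∧
    (Finset.univ.val.map c = Finset.univ.val.map ctil) := by
  set Δ : Matrix κ κ ℂ := Matrix.of (fun k ℓ => if invol k = ℓ then (1 : ℂ) else 0) with hΔdef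
  set C : Matrix κ κ ℂ := Matrix.diagonal (fun k => (c k : ℂ)) with hCdef
  set Ct : Matrix κ κ ℂ := Matrix.diagonal (fun k => (ctil k : ℂ)) with hCtdef
  -- Δ is an involution
  have hΔ2 : Δ * Δ = 1 := by
    ext k l
    simp only [Matrix.mul_apply, hΔdef, Matrix.of_apply, Matrix.one_apply]
    rw [Finset.sum_eq_single (invol k)
      (fun b _ hb => by rw [if_neg (fun h => hb h.symm), zero_mul])
      (fun h => absurd (Finset.mem_univ _) h),
      if_pos rfl, one_mul, hinvol k]
  -- v v† = 1
  have hv' : v * vᴴ = 1 := mul_eq_one_comm.mp hv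
  -- transpose inverse
  have hw1 : vᵀ * vᴴᵀ = 1 := by
    have := congrArg Matrix.transpose hv
    simpa [Matrix.transpose_mul] using this
  have hw2 : vᴴᵀ * vᵀ = 1 := by
    have := congrArg Matrix.transpose hv'
    simpa [Matrix.transpose_mul] using this
  have hvTinv : (vᵀ)⁻¹ = vᴴᵀ := Matrix.inv_eq_right_inv hw1
  -- From h1 : Δ v = vᴴᵀ Δ
  have hΔv : Δ * v = vᴴᵀ * Δ := by
    calc Δ * v = (vᴴᵀ * vᵀ) * (Δ * v) := by rw [hw2, one_mul]
    _ = vᴴᵀ * (vᵀ * Δ * v) := by noncomm_ring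
    _ = vᴴᵀ * Δ := by rw [h1]
  -- diagonal inverses
  have hCtinv : Ct * Matrix.diagonal (fun k => ((ctil k : ℂ))⁻¹) = 1 := by
    have hfun : (fun k => (ctil k : ℂ) * ((ctil k : ℂ))⁻¹) = fun _ => (1 : ℂ) :=
      funext fun k => mul_inv_cancel₀ (by exact_mod_cast (hctil k).ne')
    rw [hCtdef, Matrix.diagonal_mul_diagonal, hfun, Matrix.diagonal_one]
  -- main similarity
  have key : C * vᵀ * Matrix.diagonal (fun k => ((ctil k : ℂ))⁻¹) * vᴴᵀ = 1 := by
    have e1 : C * vᵀ * Matrix.diagonal (fun k => ((ctil k : ℂ))⁻¹) * (vᴴᵀ * Δ) = Δ := by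
      rw [← hΔv, ← mul_assoc, h2]
    have e2 : C * vᵀ * Matrix.diagonal (fun k => ((ctil k : ℂ))⁻¹) * vᴴᵀ * (Δ * Δ) = Δ * Δ := by
      calc C * vᵀ * Matrix.diagonal (fun k => ((ctil k : ℂ))⁻¹) * vᴴᵀ * (Δ * Δ)
          = (C * vᵀ * Matrix.diagonal (fun k => ((ctil k : ℂ))⁻¹) * (vᴴᵀ * Δ)) * Δ := by
            noncomm_ring
        _ = Δ * Δ := by rw [e1]
    rwa [hΔ2, mul_one] at e2
  have hsim : C = vᵀ * Ct * (vᵀ)⁻¹ := by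
    have hCtinv' : Matrix.diagonal (fun k => ((ctil k : ℂ))⁻¹) * Ct = 1 := by
      have hfun : (fun k => ((ctil k : ℂ))⁻¹ * (ctil k : ℂ)) = fun _ => (1 : ℂ) :=
        funext fun k => inv_mul_cancel₀ (by exact_mod_cast (hctil k).ne')
      rw [hCtdef, Matrix.diagonal_mul_diagonal, hfun, Matrix.diagonal_one]
    have step1 : C * vᵀ * Matrix.diagonal (fun k => ((ctil k : ℂ))⁻¹) = vᵀ := by
      calc C * vᵀ * Matrix.diagonal (fun k => ((ctil k : ℂ))⁻¹)
          = C * vᵀ * Matrix.diagonal (fun k => ((ctil k : ℂ))⁻¹) * (vᴴᵀ * vᵀ) := by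
            rw [hw2, mul_one]
        _ = (C * vᵀ * Matrix.diagonal (fun k => ((ctil k : ℂ))⁻¹) * vᴴᵀ) * vᵀ := by
            noncomm_ring
        _ = vᵀ := by rw [key, one_mul]
    have step2 : C * vᵀ = vᵀ * Ct := by
      calc C * vᵀ = (C * vᵀ * Matrix.diagonal (fun k => ((ctil k : ℂ))⁻¹)) * Ct := by
            rw [mul_assoc (C * vᵀ), hCtinv', mul_one]
        _ = vᵀ * Ct := by rw [step1]
    rw [hvTinv]
    calc C = C * (vᵀ * vᴴᵀ) := by rw [hw1, mul_one]
      _ = (C * vᵀ) * vᴴᵀ := by rw [mul_assoc]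
      _ = vᵀ * Ct * vᴴᵀ := by rw [step2]
  refine ⟨hsim, ?_⟩
  -- charpoly argument
  have hvT : IsUnit (vᵀ) := ⟨⟨vᵀ, vᴴᵀ, hw1, hw2⟩, rfl⟩
  have hchar : C.charpoly = Ct.charpoly := by
    rw [hsim]; exact charpoly_conj' _ _ hvT
  have hprod : (∏ i, (X - Polynomial.C ((c i : ℂ)))) = ∏ i, (X - Polynomial.C ((ctil i : ℂ))) := by
    rw [← charpoly_diagonal', ← charpoly_diagonal']; exact hchar
  have hroots : (Finset.univ.val.map (fun k => (c k : ℂ))) =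
      Finset.univ.val.map (fun k => (ctil k : ℂ)) := by
    have e1 := Polynomial.roots_multiset_prod_X_sub_C
      (Finset.univ.val.map (fun k => (c k : ℂ)))
    have e2 := Polynomial.roots_multiset_prod_X_sub_C
      (Finset.univ.val.map (fun k => (ctil k : ℂ)))
    rw [Multiset.map_map] at e1 e2
    have : ((Finset.univ.val.map (fun k => X - Polynomial.C ((c k : ℂ)))).prod) =
        ((Finset.univ.val.map (fun k => X - Polynomial.C ((ctil k : ℂ)))).prod) := by
      rw [← Finset.prod_eq_multiset_prod, ← Finset.prod_eq_multiset_prod]; exact hprod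
    rw [← e1, ← e2]
    simp only [Function.comp] at *
    rw [this]
  have := congrArg (Multiset.map Complex.re) hroots
  simpa [Multiset.map_map, Function.comp] using this
end

section
/- Let ρ be a positive definite Hermitian n×n matrix, H a Hermitian n×n matrix, and (L_ℓ)_{ℓ∈κ} a finite family of n×n matrices. Define D(x) := −(1/2)·Σ_ℓ (L_ℓ†L_ℓ x − 2 L_ℓ† x L_ℓ + x L_ℓ†L_ℓ). Assume D is symmetric with respect to the inner product (x,y)_ρ = Tr(ρ^{1/2} x† ρ^{1/2} y), i.e. (x, D(y))_ρ = (D(x), y)_ρ for all x, y, and assume ρ is invariant: −i(Hρ − ρH) + Σ_ℓ (L_ℓ ρ L_ℓ† − (1/2)(L_ℓ†L_ℓ ρ + ρ L_ℓ†L_ℓ)) = 0. Then Hρ = ρH. -/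
open Matrix BigOperators ComplexOrder

lemma aux_eq_zero_of_trace {n : ℕ} (M : Matrix (Fin n) (Fin n) ℂ)
    (h : ∀ y, (M * y).trace = 0) : M = 0 := by
  have h0 := h Mᴴ
  have htr : (M * Mᴴ).trace = ((∑ i, ∑ j, Complex.normSq (M i j) : ℝ) : ℂ) := by
    simp [Matrix.trace, Matrix.mul_apply, Matrix.diag, Matrix.conjTranspose_apply,
      Complex.mul_conj]
  rw [htr] at h0
  have hsum : (∑ i, ∑ j, Complex.normSq (M i j) : ℝ) = 0 := by exact_mod_cast h0
  ext i j
  have h1 := (Finset.sum_eq_zero_iff_of_nonneg (fun i _ =>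
    Finset.sum_nonneg fun j _ => Complex.normSq_nonneg _)).mp hsum i (Finset.mem_univ i)
  have h2 := (Finset.sum_eq_zero_iff_of_nonneg (fun j _ =>
    Complex.normSq_nonneg _)).mp h1 j (Finset.mem_univ j)
  simpa using Complex.normSq_eq_zero.mp h2

/-- Intermediate step in Proposition 4.5: if the dissipative part is symmetric with respect
to the inner product `(x,y)_ρ = Tr(ρ^{1/2} x† ρ^{1/2} y)` and `ρ` is invariant, then the
Hamiltonian commutes with the invariant state. -/
theorem symmetric_dissipative_part_implies_H_commutes
    {n : ℕ} {κ : Type*} [Fintype κ]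
    (ρ sqrtρ H : Matrix (Fin n) (Fin n) ℂ)
    (hρ : ρ.PosDef) (hsqrt : sqrtρ.PosSemidef) (hsq : sqrtρ * sqrtρ = ρ)
    (hH : Hᴴ = H)
    (L : κ → Matrix (Fin n) (Fin n) ℂ)
    (D : Matrix (Fin n) (Fin n) ℂ → Matrix (Fin n) (Fin n) ℂ)
    (hD : ∀ x, D x = -(1 / 2 : ℂ) •
      ∑ ℓ, ((L ℓ)ᴴ * L ℓ * x - (2 : ℂ) • ((L ℓ)ᴴ * x * L ℓ) + x * ((L ℓ)ᴴ * L ℓ)))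
    (hsym : ∀ x y, (sqrtρ * xᴴ * sqrtρ * D y).trace = (sqrtρ * (D x)ᴴ * sqrtρ * y).trace)
    (hinvρ : -Complex.I • (H * ρ - ρ * H) +
      ∑ ℓ, (L ℓ * ρ * (L ℓ)ᴴ - (1 / 2 : ℂ) • ((L ℓ)ᴴ * L ℓ * ρ + ρ * ((L ℓ)ᴴ * L ℓ))) = 0) :
    H * ρ = ρ * H := by
  have hD1 : D 1 = 0 := by
    rw [hD]
    rw [Finset.sum_eq_zero, smul_zero]
    intro ℓ _
    simp only [Matrix.mul_one, Matrix.one_mul]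
    module
  have key : ∀ y, (ρ * D y).trace = 0 := by
    intro y
    have h := hsym 1 y
    rw [hD1] at h
    simp only [Matrix.conjTranspose_one, Matrix.mul_one, Matrix.conjTranspose_zero,
      Matrix.mul_zero, Matrix.zero_mul, Matrix.trace_zero, hsq] at h
    exact h
  set M := ∑ ℓ, (L ℓ * ρ * (L ℓ)ᴴ - (1 / 2 : ℂ) • ((L ℓ)ᴴ * L ℓ * ρ + ρ * ((L ℓ)ᴴ * L ℓ)))
    with hM
  have key2 : ∀ y, (M * y).trace = 0 := by
    intro y
    have h := key y
    rw [hD] at h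
    rw [hM]
    rw [Matrix.mul_smul, Matrix.trace_smul, Matrix.mul_sum, Matrix.trace_sum] at h
    rw [Finset.sum_mul, Matrix.trace_sum, ← h, Finset.smul_sum]
    refine Finset.sum_congr rfl fun ℓ _ => ?_
    have c1 := Matrix.trace_mul_cycle ρ ((L ℓ)ᴴ * y) (L ℓ)
    have c2 := Matrix.trace_mul_cycle ρ y ((L ℓ)ᴴ * L ℓ)
    simp only [Matrix.mul_assoc] at c1 c2 ⊢
    simp only [Matrix.sub_mul, Matrix.smul_mul, Matrix.add_mul, Matrix.mul_sub,
      Matrix.mul_add, Matrix.mul_smul, Matrix.trace_sub, Matrix.trace_add,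
      Matrix.trace_smul, smul_eq_mul, Matrix.mul_assoc]
    rw [← c1, ← c2]
    ring
  have hM0 : M = 0 := aux_eq_zero_of_trace M key2
  rw [hM0, add_zero] at hinvρ
  have h2 : H * ρ - ρ * H = 0 := by
    have := smul_eq_zero.mp hinvρ
    rcases this with h | h
    · exact absurd (neg_eq_zero.mp h) Complex.I_ne_zero
    · exact h
  exact sub_eq_zero.mp h2
end

section
/- Let ν ∈ (0,1) with ν ≠ 1/2, and let L be the 2×2 complex matrix with entries L₁₂ = √ν, L₂₁ = √(1−ν), and L₁₁ = L₂₂ = 0. Then there exist no θ ∈ ℝ and no complex number c such that e^{iθ}·L = c·(e^{iθ}·L)†; equivalently, there are no c ∈ ℂ and θ ∈ ℝ with e^{2iθ}·√ν = c·√(1−ν) and e^{2iθ}·√(1−ν) = c·√ν. In particular, the generator of the corresponding two-level quantum Markov semigroup admits no thermodynamically consistent special representation. -/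
open Matrix BigOperators

/-- Adding the equations gives `(e - c)(x + y) = 0`, so `e = c` unless `x = y = 0`;
subtracting them then gives `2e(x - y) = 0`. -/
lemma eq_of_mul_eq_mul_swap {e c : ℂ} (he : e ≠ 0) {x y : ℝ} (hx : 0 ≤ x) (hy : 0 ≤ y)
    (h₁ : e * x = c * y) (h₂ : e * y = c * x) : x = y := by
  rcases (add_nonneg hx hy).eq_or_lt with hsum | hsum
  · linarith
  have hec : e = c := by
    have hprod : (e - c) * ((x + y : ℝ) : ℂ) = 0 := by push_cast; linear_combination h₁ + h₂
    exact sub_eq_zero.mp ((mul_eq_zero.mp hprod).resolve_right (by exact_mod_cast hsum.ne'))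
  have hdiff : (2 * e) * ((x - y : ℝ) : ℂ) = 0 := by
    push_cast; linear_combination h₁ - h₂ + (x - y : ℂ) * hec
  simpa [he, sub_eq_zero] using hdiff

lemma Real.sqrt_ne_sqrt_one_sub {ν : ℝ} (h₀ : 0 ≤ ν) (h₁ : ν ≤ 1) (hν : ν ≠ 1 / 2) :
    √ν ≠ √(1 - ν) := by
  rw [Ne, Real.sqrt_inj h₀ (by linarith)]
  contrapose! hν
  linarith

/-- Example of Section 3: for the two-level jump operator `L = √ν σ₊ + √(1−ν) σ₋` with
`ν ∈ (0,1)`, `ν ≠ 1/2`, no special representation `e^{iθ}L` satisfies the thermodynamic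
consistency relation `e^{iθ}L = c·(e^{iθ}L)†`; equivalently, there are no `c ∈ ℂ`, `θ ∈ ℝ`
with `e^{2iθ}√ν = c√(1−ν)` and `e^{2iθ}√(1−ν) = c√ν`. -/
theorem two_level_no_tc_representation
    (ν : ℝ) (h0 : 0 < ν) (h1 : ν < 1) (hν : ν ≠ 1 / 2) :
    (¬ ∃ (θ : ℝ) (c : ℂ),
        Complex.exp ((θ : ℂ) * Complex.I) •
            !![(0 : ℂ), (Real.sqrt ν : ℂ); (Real.sqrt (1 - ν) : ℂ), 0] =
          c • (Complex.exp ((θ : ℂ) * Complex.I) •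
            !![(0 : ℂ), (Real.sqrt ν : ℂ); (Real.sqrt (1 - ν) : ℂ), 0])ᴴ) ∧
    (¬ ∃ (θ : ℝ) (c : ℂ),
        Complex.exp (2 * (θ : ℂ) * Complex.I) * (Real.sqrt ν : ℂ) = c * (Real.sqrt (1 - ν) : ℂ) ∧
        Complex.exp (2 * (θ : ℂ) * Complex.I) * (Real.sqrt (1 - ν) : ℂ) = c * (Real.sqrt ν : ℂ)) := by
  have hne := Real.sqrt_ne_sqrt_one_sub h0.le h1.le hν
  have key {e c : ℂ} (he : e ≠ 0) := eq_of_mul_eq_mul_swap (c := c) he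
    (Real.sqrt_nonneg ν) (Real.sqrt_nonneg (1 - ν))
  constructor
  · -- The off-diagonal entries give the scalar system with `c * conj (exp (θ i))` in place of `c`.
    rintro ⟨θ, c, h⟩
    have h₀₁ := congrFun₂ h 0 1
    have h₁₀ := congrFun₂ h 1 0
    simp only [Matrix.smul_apply, conjTranspose_apply, of_apply, cons_val', cons_val_zero,
      cons_val_one, empty_val', cons_val_fin_one, smul_eq_mul, star_mul', Complex.star_def,
      Complex.conj_ofReal] at h₀₁ h₁₀
    exact hne <| key (Complex.exp_ne_zero _)
      (h₀₁.trans (mul_assoc _ _ _).symm) (h₁₀.trans (mul_assoc _ _ _).symm)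
  · rintro ⟨θ, c, h₁, h₂⟩
    exact hne <| key (Complex.exp_ne_zero _) h₁ h₂
end
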